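/- arXiv:2501.19229 — 7 statements merged into one kernel-verified Lean document; each statement's English description precedes it below -/
import Mathlib

section
/- Suppose that 0 ≤ x₁ ≤ x₂ ≤ ... ≤ x_r = 1 are real numbers satisfying x_i + x_j ≤ x_{i+j} for all 1 ≤ i ≤ j with i + j ≤ r. Then x₁ · x₂ ⋯ x_r ≤ r!/r^r. -/
/-!
Pairing `i` with `n - i` in superadditivity gives `2 (x₁ + ⋯ + xₙ) ≤ (n + 1) xₙ`, and with this
an induction on `n` yields `x₁/1 + x₂/2 + ⋯ + xₙ/n ≤ xₙ`. So the numbers `r xᵢ / i` have sum at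
most `r xᵣ = r`, and AM-GM bounds their product by `1`. Since `∏ i/r = r!/r^r`, this is the claim.
-/

open Finset

def SuperadditiveUpTo (x : ℕ → ℝ) (n : ℕ) : Prop :=
  ∀ i j : ℕ, 1 ≤ i → i ≤ j → i + j ≤ n → x i + x j ≤ x (i + j)

namespace SuperadditiveUpTo

variable {x : ℕ → ℝ} {n : ℕ}

theorem mono {m : ℕ} (hx : SuperadditiveUpTo x n) (hmn : m ≤ n) : SuperadditiveUpTo x m :=
  fun i j hi hij hm => hx i j hi hij (hm.trans hmn)

theorem add_le (hx : SuperadditiveUpTo x n) {i j : ℕ} (hi : 1 ≤ i) (hj : 1 ≤ j)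
    (hij : i + j ≤ n) : x i + x j ≤ x (i + j) := by
  rcases le_total i j with h | h
  · exact hx i j hi h hij
  · rw [add_comm i, add_comm (x i)]
    exact hx j i hj h (by omega)

theorem two_mul_sum_le (hx : SuperadditiveUpTo x n) (hn : 1 ≤ n) :
    2 * ∑ i ∈ Icc 1 n, x i ≤ (n + 1) * x n := by
  obtain ⟨m, rfl⟩ : ∃ m, n = m + 1 := ⟨n - 1, by omega⟩
  have hreflect : ∑ i ∈ Icc 1 m, x (m + 1 - i) = ∑ i ∈ Icc 1 m, x i := by
    simpa [Ico_add_one_right_eq_Icc] using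
      sum_Ico_reflect x 1 (m := m + 1) (n := m + 1) le_self_add
  have hpairs : ∑ i ∈ Icc 1 m, (x i + x (m + 1 - i)) ≤ ∑ i ∈ Icc 1 m, x (m + 1) :=
    sum_le_sum fun i hi => by
      rw [mem_Icc] at hi
      simpa [show i + (m + 1 - i) = m + 1 by omega] using
        hx.add_le (j := m + 1 - i) hi.1 (by omega) (by omega)
  rw [sum_add_distrib, hreflect, sum_const, Nat.card_Icc, nsmul_eq_mul] at hpairs
  rw [sum_Icc_succ_top (by omega)]
  push_cast at hpairs ⊢
  linarith

theorem mul_sum_div_add_le (hx : SuperadditiveUpTo x n) (hn : 1 ≤ n) :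
    n * ∑ k ∈ Icc 1 n, x k / k + x n ≤ 2 * ∑ k ∈ Icc 1 n, x k := by
  induction n, hn using Nat.le_induction with
  | base => simp [two_mul]
  | succ n hn ih =>
    have hx' := hx.mono n.le_succ
    have ih := ih hx'
    have hpair := hx'.two_mul_sum_le hn
    have hn0 : (0 : ℝ) < n := by exact_mod_cast hn
    have hle : ∑ k ∈ Icc 1 n, x k / k ≤ x n :=
      le_of_mul_le_mul_left (by linarith) hn0
    rw [sum_Icc_succ_top (by omega), sum_Icc_succ_top (by omega)]
    push_cast
    field_simp
    linarith

theorem sum_div_le (hx : SuperadditiveUpTo x n) (hn : 1 ≤ n) :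
    ∑ k ∈ Icc 1 n, x k / k ≤ x n := by
  have hmul := hx.mul_sum_div_add_le hn
  have hpair := hx.two_mul_sum_le hn
  have hn0 : (0 : ℝ) < n := by exact_mod_cast hn
  exact le_of_mul_le_mul_left (by linarith) hn0

end SuperadditiveUpTo

theorem prod_le_one_of_sum_le_card {ι : Type*} (s : Finset ι) (z : ι → ℝ)
    (hz : ∀ i ∈ s, 0 ≤ z i) (hsum : ∑ i ∈ s, z i ≤ #s) : ∏ i ∈ s, z i ≤ 1 := by
  rcases s.eq_empty_or_nonempty with rfl | hs
  · simp
  have hcard : (0 : ℝ) < #s := by exact_mod_cast hs.card_pos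
  have amgm := Real.geom_mean_le_arith_mean s 1 z (by simp) (by simpa using hcard) hz
  simp only [Pi.one_apply, Real.rpow_one, one_mul, sum_const, nsmul_eq_mul, mul_one] at amgm
  have := amgm.trans ((div_le_one hcard).2 hsum)
  rwa [Real.rpow_inv_le_iff_of_pos (prod_nonneg hz) zero_le_one hcard, Real.one_rpow] at this

theorem prod_Icc_div_eq_factorial_div_pow (r : ℕ) :
    ∏ i ∈ Icc 1 r, ((i : ℝ) / r) = r.factorial / (r : ℝ) ^ r := by
  rw [prod_div_distrib, prod_const, Nat.card_Icc, add_tsub_cancel_right, ← Nat.cast_prod,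
    ← Ico_add_one_right_eq_Icc, prod_Ico_id_eq_factorial]

theorem chao_yu_product_inequality_general (r : ℕ) (x : ℕ → ℝ)
    (hx0 : 0 ≤ x 1)
    (hmono : ∀ i j : ℕ, 1 ≤ i → i ≤ j → j ≤ r → x i ≤ x j)
    (hxr : x r = 1)
    (hsuper : ∀ i j : ℕ, 1 ≤ i → i ≤ j → i + j ≤ r → x i + x j ≤ x (i + j)) :
    ∏ i ∈ Finset.Icc 1 r, x i ≤ (r.factorial : ℝ) / (r : ℝ) ^ r := by
  obtain rfl | hr := Nat.eq_zero_or_pos r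
  · simp
  have hsum : ∑ i ∈ Icc 1 r, x i / i ≤ 1 := hxr ▸ SuperadditiveUpTo.sum_div_le hsuper hr
  have hamgm : ∏ i ∈ Icc 1 r, (r * x i / i) ≤ 1 := by
    refine prod_le_one_of_sum_le_card _ _ (fun i hi => ?_) ?_
    · rw [mem_Icc] at hi
      have := hx0.trans (hmono 1 i le_rfl hi.1 hi.2)
      positivity
    · simp_rw [mul_div_assoc, ← mul_sum, Nat.card_Icc, add_tsub_cancel_right]
      exact mul_le_of_le_one_right (Nat.cast_nonneg r) hsum
  calc ∏ i ∈ Icc 1 r, x i = ∏ i ∈ Icc 1 r, ((i : ℝ) / r * (r * x i / i)) := by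
        refine prod_congr rfl fun i hi => ?_
        have hi0 : (i : ℝ) ≠ 0 := Nat.cast_ne_zero.2 (by grind)
        field_simp
    _ = r.factorial / (r : ℝ) ^ r * ∏ i ∈ Icc 1 r, (r * x i / i) := by
        rw [prod_mul_distrib, prod_Icc_div_eq_factorial_div_pow]
    _ ≤ r.factorial / (r : ℝ) ^ r := mul_le_of_le_one_right (by positivity) hamgm

/-- Chao–Yu product inequality: if `0 ≤ x 1 ≤ ⋯ ≤ x r = 1` and
`x i + x j ≤ x (i+j)` whenever `1 ≤ i ≤ j` and `i + j ≤ r`, then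
`x 1 ⋯ x r ≤ r!/r^r`. -/
theorem chao_yu_product_inequality (r : ℕ) (hr : 2 ≤ r) (x : ℕ → ℝ)
    (hx0 : 0 ≤ x 1)
    (hmono : ∀ i j : ℕ, 1 ≤ i → i ≤ j → j ≤ r → x i ≤ x j)
    (hxr : x r = 1)
    (hsuper : ∀ i j : ℕ, 1 ≤ i → i ≤ j → i + j ≤ r → x i + x j ≤ x (i + j)) :
    ∏ i ∈ Finset.Icc 1 r, x i ≤ (r.factorial : ℝ) / (r : ℝ) ^ r :=
  chao_yu_product_inequality_general r x hx0 hmono hxr hsuper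
end

section
/- Suppose that 0 ≤ x₁ ≤ x₂ ≤ ... ≤ x_r = 1 are real numbers satisfying x_i + x_j ≤ x_{i+j} for all 1 ≤ i ≤ j with i + j ≤ r, and moreover x₁ · x₂ ⋯ x_r = r!/r^r. Then x_i = i/r for every i ∈ [r]. -/
open Finset

/-- Algebraic identity: `m * ∑_{i=1}^m x i / i = ∑_{i=1}^m x i + ∑_{k=1}^{m-1} ∑_{i=1}^k x i / i`. -/
lemma chao_yu_aux_identity (x : ℕ → ℝ) (m : ℕ) :
    (m : ℝ) * ∑ i ∈ Finset.Icc 1 m, x i / i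
      = (∑ i ∈ Finset.Icc 1 m, x i)
        + ∑ k ∈ Finset.Ico 1 m, ∑ i ∈ Finset.Icc 1 k, x i / i := by
  induction m with
  | zero => simp
  | succ m ih =>
    rcases Nat.eq_zero_or_pos m with hm | hm
    · subst hm; norm_num
    · rw [Finset.sum_Icc_succ_top (by omega), Finset.sum_Icc_succ_top (by omega),
        Finset.sum_Ico_succ_top (by omega)]
      have hne : ((m : ℝ) + 1) ≠ 0 := by positivity
      have e : ((m : ℝ) + 1) * ((∑ i ∈ Finset.Icc 1 m, x i / i) + x (m + 1) / ((m : ℝ) + 1))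
          = ((m : ℝ) + 1) * (∑ i ∈ Finset.Icc 1 m, x i / i) + x (m + 1) := by
        field_simp
      push_cast
      rw [e]
      linarith [ih]

/-- Key linear inequality: `∑_{i=1}^m x i / i ≤ x m` for superadditive sequences. -/
lemma chao_yu_sum_div_le (r : ℕ) (x : ℕ → ℝ)
    (hpair : ∀ a b : ℕ, 1 ≤ a → 1 ≤ b → a + b ≤ r → x a + x b ≤ x (a + b)) :
    ∀ m : ℕ, 1 ≤ m → m ≤ r → ∑ i ∈ Finset.Icc 1 m, x i / i ≤ x m := by
  intro m
  induction m using Nat.strong_induction_on with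
  | _ m ih =>
    intro hm1 hmr
    have key := chao_yu_aux_identity x m
    -- bound the inner sums by x k using strong induction hypothesis
    have h1 : ∑ k ∈ Finset.Ico 1 m, ∑ i ∈ Finset.Icc 1 k, x i / i
        ≤ ∑ k ∈ Finset.Ico 1 m, x k := by
      apply Finset.sum_le_sum
      intro k hk
      rw [Finset.mem_Ico] at hk
      exact ih k hk.2 hk.1 (le_trans (le_of_lt hk.2) hmr)
    -- rewrite Ico sums via range
    have hA : ∑ k ∈ Finset.Ico 1 m, x k = ∑ j ∈ Finset.range (m - 1), x (1 + j) := by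
      rw [Finset.sum_Ico_eq_sum_range]
    have hA' : ∑ k ∈ Finset.Ico 1 m, x k = ∑ j ∈ Finset.range (m - 1), x (m - 1 - j) := by
      rw [hA, ← Finset.sum_range_reflect]
      apply Finset.sum_congr rfl
      intro j hj
      rw [Finset.mem_range] at hj
      congr 1
      omega
    -- pairing bound
    have h2 : (∑ k ∈ Finset.Ico 1 m, x k) + (∑ k ∈ Finset.Ico 1 m, x k)
        ≤ ((m : ℝ) - 1) * x m := by
      nth_rewrite 1 [hA]
      rw [hA', ← Finset.sum_add_distrib]
      have : ∀ j ∈ Finset.range (m - 1), x (1 + j) + x (m - 1 - j) ≤ x m := by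
        intro j hj
        rw [Finset.mem_range] at hj
        have := hpair (1 + j) (m - 1 - j) (by omega) (by omega) (by omega)
        have hxm : (1 + j) + (m - 1 - j) = m := by omega
        rwa [hxm] at this
      calc ∑ j ∈ Finset.range (m - 1), (x (1 + j) + x (m - 1 - j))
          ≤ ∑ _j ∈ Finset.range (m - 1), x m := Finset.sum_le_sum this
        _ = ((m : ℝ) - 1) * x m := by
            rw [Finset.sum_const, Finset.card_range, nsmul_eq_mul]
            congr 1
            push_cast [Nat.cast_sub hm1]
            ring
    -- split top term from Icc sum
    have h3 : ∑ i ∈ Finset.Icc 1 m, x i = (∑ k ∈ Finset.Ico 1 m, x k) + x m := by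
      rw [← Finset.Ico_add_one_right_eq_Icc, Finset.sum_Ico_succ_top hm1]
    have hmpos : (0 : ℝ) < (m : ℝ) := by exact_mod_cast hm1
    have : (m : ℝ) * ∑ i ∈ Finset.Icc 1 m, x i / i ≤ (m : ℝ) * x m := by
      rw [key, h3]
      linarith
    exact le_of_mul_le_mul_left this hmpos

/-- Equality case of the Chao–Yu product inequality: if `0 ≤ x 1 ≤ ⋯ ≤ x r = 1`,
`x i + x j ≤ x (i+j)` whenever `1 ≤ i ≤ j` and `i + j ≤ r`, and
`x 1 ⋯ x r = r!/r^r`, then `x i = i/r` for every `i ∈ [r]`. -/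
theorem chao_yu_product_equality (r : ℕ) (hr : 2 ≤ r) (x : ℕ → ℝ)
    (hx0 : 0 ≤ x 1)
    (hmono : ∀ i j : ℕ, 1 ≤ i → i ≤ j → j ≤ r → x i ≤ x j)
    (hxr : x r = 1)
    (hsuper : ∀ i j : ℕ, 1 ≤ i → i ≤ j → i + j ≤ r → x i + x j ≤ x (i + j))
    (heq : ∏ i ∈ Finset.Icc 1 r, x i = (r.factorial : ℝ) / (r : ℝ) ^ r) :
    ∀ i ∈ Finset.Icc 1 r, x i = (i : ℝ) / (r : ℝ) := by
  have hr1 : 1 ≤ r := le_trans (by norm_num) hr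
  have hrpos : (0 : ℝ) < (r : ℝ) := by exact_mod_cast hr1
  -- symmetric version of superadditivity
  have hpair : ∀ a b : ℕ, 1 ≤ a → 1 ≤ b → a + b ≤ r → x a + x b ≤ x (a + b) := by
    intro a b ha hb hab
    rcases le_total a b with h | h
    · exact hsuper a b ha h hab
    · have := hsuper b a hb h (by omega)
      rw [add_comm b a] at this
      linarith
  -- positivity of each x i
  have hfacpos : (0 : ℝ) < (r.factorial : ℝ) := by exact_mod_cast r.factorial_pos
  have hprodne : ∏ i ∈ Finset.Icc 1 r, x i ≠ 0 := by
    rw [heq]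
    positivity
  have hxnn : ∀ i ∈ Finset.Icc 1 r, 0 ≤ x i := by
    intro i hi
    rw [Finset.mem_Icc] at hi
    exact le_trans hx0 (hmono 1 i le_rfl hi.1 hi.2)
  have hxpos : ∀ i ∈ Finset.Icc 1 r, 0 < x i := by
    intro i hi
    have hne : x i ≠ 0 := by
      intro h0
      exact hprodne (Finset.prod_eq_zero hi h0)
    exact lt_of_le_of_ne (hxnn i hi) (Ne.symm hne)
  -- the sum bound
  have hsum : ∑ i ∈ Finset.Icc 1 r, x i / i ≤ 1 := by
    have := chao_yu_sum_div_le r x hpair r hr1 le_rfl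
    rwa [hxr] at this
  -- define z i = r * x i / i
  set z : ℕ → ℝ := fun i => (r : ℝ) * x i / i with hz
  have hzsum : ∑ i ∈ Finset.Icc 1 r, z i ≤ (r : ℝ) := by
    have : ∑ i ∈ Finset.Icc 1 r, z i = (r : ℝ) * ∑ i ∈ Finset.Icc 1 r, x i / i := by
      rw [Finset.mul_sum]
      apply Finset.sum_congr rfl
      intro i _
      rw [hz]
      ring
    rw [this]
    calc (r : ℝ) * ∑ i ∈ Finset.Icc 1 r, x i / i ≤ (r : ℝ) * 1 :=
          mul_le_mul_of_nonneg_left hsum (le_of_lt hrpos)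
      _ = (r : ℝ) := mul_one _
  have hcastprod : ∏ i ∈ Finset.Icc 1 r, (i : ℝ) = (r.factorial : ℝ) := by
    rw [← Nat.cast_prod]
    congr 1
    rw [← Finset.Ico_add_one_right_eq_Icc]
    exact Finset.prod_Ico_id_eq_factorial r
  have hzprod : ∏ i ∈ Finset.Icc 1 r, z i = 1 := by
    have : ∏ i ∈ Finset.Icc 1 r, z i
        = (∏ i ∈ Finset.Icc 1 r, ((r : ℝ) * x i)) / ∏ i ∈ Finset.Icc 1 r, (i : ℝ) := by
      rw [← Finset.prod_div_distrib]
    rw [this, Finset.prod_mul_distrib, Finset.prod_const, Nat.card_Icc, hcastprod, heq]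
    have h1 : r + 1 - 1 = r := by omega
    rw [h1]
    field_simp
  have hzpos : ∀ i ∈ Finset.Icc 1 r, 0 < z i := by
    intro i hi
    have hipos : (0 : ℝ) < (i : ℝ) := by
      rw [Finset.mem_Icc] at hi
      exact_mod_cast hi.1
    exact div_pos (mul_pos hrpos (hxpos i hi)) hipos
  -- logarithm argument: all z i = 1
  have hlog : ∑ i ∈ Finset.Icc 1 r, Real.log (z i) = 0 := by
    rw [← Real.log_prod (fun i hi => ne_of_gt (hzpos i hi)), hzprod, Real.log_one]
  have hTnn : ∀ i ∈ Finset.Icc 1 r, 0 ≤ z i - 1 - Real.log (z i) := by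
    intro i hi
    have := Real.log_le_sub_one_of_pos (hzpos i hi)
    linarith
  have hTsum : ∑ i ∈ Finset.Icc 1 r, (z i - 1 - Real.log (z i)) ≤ 0 := by
    rw [Finset.sum_sub_distrib, Finset.sum_sub_distrib, hlog, Finset.sum_const, Nat.card_Icc]
    have h1 : r + 1 - 1 = r := by omega
    rw [h1]
    simp only [nsmul_eq_mul, mul_one, sub_zero]
    linarith [hzsum]
  have hTzero : ∀ i ∈ Finset.Icc 1 r, z i - 1 - Real.log (z i) = 0 := by
    have hge : (0 : ℝ) ≤ ∑ i ∈ Finset.Icc 1 r, (z i - 1 - Real.log (z i)) :=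
      Finset.sum_nonneg hTnn
    have hsz : ∑ i ∈ Finset.Icc 1 r, (z i - 1 - Real.log (z i)) = 0 := le_antisymm hTsum hge
    exact (Finset.sum_eq_zero_iff_of_nonneg hTnn).mp hsz
  -- conclude
  intro i hi
  have hzi : z i = 1 := by
    by_contra hne
    have := Real.log_lt_sub_one_of_pos (hzpos i hi) hne
    have := hTzero i hi
    linarith
  rw [Finset.mem_Icc] at hi
  have hipos : (0 : ℝ) < (i : ℝ) := by exact_mod_cast hi.1
  rw [hz] at hzi
  simp only at hzi
  field_simp at hzi ⊢
  linarith
end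

section
/- Let H be a 2-covered T_r-free r-graph. Then H is an (n, r, r−1)-system, i.e., every set of r−1 vertices of H is contained in at most one edge of H. -/
/-- An `r`-graph is `𝒯_r`-free if it contains no three (distinct) edges `A, B, C`
with `A ⊆ B ∪ C` and `(B ∩ C) \ A ≠ ∅`. -/
def TriangleFree {V : Type*} [DecidableEq V] (H : Finset (Finset V)) : Prop :=
  ¬ ∃ A ∈ H, ∃ B ∈ H, ∃ C ∈ H, A ≠ B ∧ A ≠ C ∧ B ≠ C ∧
      A ⊆ B ∪ C ∧ ((B ∩ C) \ A).Nonempty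

/-- A `2`-covered `𝒯_r`-free `r`-graph is an `(n, r, r−1)`-system: every set of
`r−1` vertices is contained in at most one edge. -/
theorem two_covered_triangle_free_is_system {V : Type*} [DecidableEq V] [Fintype V]
    (r : ℕ) (hr : 3 ≤ r) (H : Finset (Finset V))
    (huniform : ∀ e ∈ H, e.card = r)
    (hcov : ∀ u v : V, u ≠ v → ∃ e ∈ H, u ∈ e ∧ v ∈ e)
    (hfree : TriangleFree H) :
    ∀ S : Finset V, S.card = r - 1 → (H.filter (fun e => S ⊆ e)).card ≤ 1 := by
  intro S hS
  rw [Finset.card_le_one]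
  intro B hB C hC
  simp only [Finset.mem_filter] at hB hC
  obtain ⟨hBH, hSB⟩ := hB
  obtain ⟨hCH, hSC⟩ := hC
  by_contra hBC
  -- B = S ∪ {b}, C = S ∪ {c}
  have hcardB : B.card = r := huniform B hBH
  have hcardC : C.card = r := huniform C hCH
  have hSlt : S.card < B.card := by omega
  obtain ⟨b, hbB, hbS⟩ := Finset.exists_of_ssubset (hSB.ssubset_of_ne (by intro h; rw [h] at hS; omega))
  have hSltC : S.card < C.card := by omega
  obtain ⟨c, hcC, hcS⟩ := Finset.exists_of_ssubset (hSC.ssubset_of_ne (by intro h; rw [h] at hS; omega))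
  have hBeq : B = insert b S :=
    (Finset.eq_of_subset_of_card_le (Finset.insert_subset hbB hSB)
      (by rw [Finset.card_insert_of_notMem hbS]; omega)).symm
  have hCeq : C = insert c S :=
    (Finset.eq_of_subset_of_card_le (Finset.insert_subset hcC hSC)
      (by rw [Finset.card_insert_of_notMem hcS]; omega)).symm
  have hbc : b ≠ c := by
    intro h; apply hBC; rw [hBeq, hCeq, h]
  obtain ⟨A, hAH, hbA, hcA⟩ := hcov b c hbc
  have hbC : b ∉ C := by
    rw [hCeq]; simp [hbS, hbc]
  have hcB : c ∉ B := by
    rw [hBeq]; simp [hcS, Ne.symm hbc]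
  apply hfree
  refine ⟨B, hBH, C, hCH, A, hAH, hBC, ?_, ?_, ?_, ⟨c, ?_⟩⟩
  · intro h; exact hcB (h ▸ hcA)
  · intro h; exact hbC (h ▸ hbA)
  · intro x hx
    rcases Finset.mem_insert.mp (hBeq ▸ hx) with h | h
    · exact Finset.mem_union_right _ (h ▸ hbA)
    · exact Finset.mem_union_left _ (hSC h)
  · simp [hcC, hcA, hcB]
end

section
/- Let H be a 2-covered T_r-free r-graph on [n] and suppose (x₁,...,x_n) is an optimal solution for the Lagrangian of H (so P_H(x) = λ(H) = 1/r^r). Then every coordinate satisfies x_i ≤ 1/r. -/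
open Finset

theorem Finset.prod_eq_ite_mul_prod_erase {α M : Type*} [CommMonoid M] [DecidableEq α]
    (s : Finset α) (f : α → M) (a : α) :
    ∏ i ∈ s, f i = (if a ∈ s then f a else 1) * ∏ i ∈ s.erase a, f i := by
  split_ifs with h
  · exact (mul_prod_erase s f h).symm
  · rw [erase_eq_of_notMem h, one_mul]

section LagrangePoly

variable {V : Type*} [DecidableEq V] (H : Finset (Finset V)) (x : V → ℝ)

def lagrangePoly : ℝ := ∑ e ∈ H, ∏ i ∈ e, x i

def lagrangePolyDeriv (j : V) : ℝ := ∑ e ∈ H with j ∈ e, ∏ i ∈ e.erase j, x i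

/-- For `j ≠ k` this is the mixed second partial derivative of `lagrangePoly H` in `x j`, `x k`. -/
def lagrangePolyDeriv₂ (j k : V) : ℝ :=
  ∑ e ∈ H with j ∈ e ∧ k ∈ e, ∏ i ∈ (e.erase j).erase k, x i

variable {H x}

theorem lagrangePolyDeriv₂_nonneg (hx : ∀ i, 0 ≤ x i) (j k : V) :
    0 ≤ lagrangePolyDeriv₂ H x j k :=
  sum_nonneg fun _ _ => prod_nonneg fun i _ => hx i

theorem mul_lagrangePolyDeriv₂_le (hx : ∀ i, 0 ≤ x i) {j k : V} (hjk : j ≠ k) :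
    x k * lagrangePolyDeriv₂ H x j k ≤ lagrangePolyDeriv H x j := by
  rw [lagrangePolyDeriv₂, lagrangePolyDeriv, mul_sum]
  calc ∑ e ∈ H with j ∈ e ∧ k ∈ e, x k * ∏ i ∈ (e.erase j).erase k, x i
      = ∑ e ∈ H with j ∈ e ∧ k ∈ e, ∏ i ∈ e.erase j, x i := by
        refine sum_congr rfl fun e he => ?_
        have hke : k ∈ e.erase j := mem_erase.mpr ⟨hjk.symm, (mem_filter.mp he).2.2⟩
        exact mul_prod_erase _ x hke
    _ ≤ ∑ e ∈ H with j ∈ e, ∏ i ∈ e.erase j, x i :=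
        sum_le_sum_of_subset_of_nonneg (monotone_filter_right _ fun _ _ h => h.1)
          fun _ _ _ => prod_nonneg fun i _ => hx i

variable {r : ℕ}

theorem sum_mul_lagrangePolyDeriv [Fintype V] (huniform : ∀ e ∈ H, e.card = r) :
    ∑ j, x j * lagrangePolyDeriv H x j = r * lagrangePoly H x := by
  simp only [lagrangePolyDeriv, lagrangePoly, sum_filter, mul_sum, mul_ite, mul_zero]
  rw [sum_comm]
  refine sum_congr rfl fun e he => ?_
  rw [sum_ite_mem, univ_inter, sum_congr rfl fun j hj => mul_prod_erase e x hj, sum_const,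
    huniform e he, nsmul_eq_mul]

theorem sum_erase_mul_lagrangePolyDeriv₂ [Fintype V] (huniform : ∀ e ∈ H, e.card = r) (k : V) :
    ∑ j ∈ univ.erase k, x j * lagrangePolyDeriv₂ H x j k =
      (r - 1) * lagrangePolyDeriv H x k := by
  simp only [lagrangePolyDeriv₂, lagrangePolyDeriv, sum_filter, mul_sum, mul_ite, mul_zero]
  rw [sum_comm]
  refine sum_congr rfl fun e he => ?_
  split_ifs with hk
  · have hr : 1 ≤ r := huniform e he ▸ card_pos.mpr ⟨k, hk⟩
    calc ∑ j ∈ univ.erase k, (if j ∈ e ∧ k ∈ e then x j * ∏ i ∈ (e.erase j).erase k, x i else 0)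
        = ∑ j ∈ e.erase k, x j * ∏ i ∈ (e.erase k).erase j, x i := by
          rw [← sum_filter]
          refine sum_congr ?_ fun j _ => by rw [erase_right_comm]
          ext j
          simp [hk, and_comm]
      _ = ∑ j ∈ e.erase k, ∏ i ∈ e.erase k, x i :=
          sum_congr rfl fun j hj => mul_prod_erase _ x hj
      _ = (r - 1) * ∏ i ∈ e.erase k, x i := by
          rw [sum_const, card_erase_of_mem hk, huniform e he, nsmul_eq_mul, Nat.cast_sub hr,
            Nat.cast_one]
  · exact sum_eq_zero fun j _ => if_neg fun h => hk h.2

theorem lagrangePoly_transfer {j l : V} (hjl : j ≠ l) (ε : ℝ) :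
    lagrangePoly H (fun i => x i + (if i = l then ε else 0) - (if i = j then ε else 0)) =
      lagrangePoly H x + ε * (lagrangePolyDeriv H x l - lagrangePolyDeriv H x j) -
        ε ^ 2 * lagrangePolyDeriv₂ H x l j := by
  set y : V → ℝ := fun i => x i + (if i = l then ε else 0) - (if i = j then ε else 0)
  simp only [lagrangePoly, lagrangePolyDeriv, lagrangePolyDeriv₂, sum_filter, mul_sub, mul_sum,
    ← sum_sub_distrib, ← sum_add_distrib]
  refine sum_congr rfl fun e _ => ?_
  have hrest : ∏ i ∈ (e.erase l).erase j, y i = ∏ i ∈ (e.erase l).erase j, x i :=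
    prod_congr rfl fun i hi => by
      obtain ⟨hij, hil, -⟩ : i ≠ j ∧ i ≠ l ∧ i ∈ e := by simpa using hi
      simp [y, hij, hil]
  have hsplit (f : V → ℝ) : ∏ i ∈ e, f i =
      (if l ∈ e then f l else 1) * ((if j ∈ e then f j else 1) * ∏ i ∈ (e.erase l).erase j, f i) := by
    rw [prod_eq_ite_mul_prod_erase e f l, prod_eq_ite_mul_prod_erase (e.erase l) f j]
    simp [hjl]
  have hx_l : ∏ i ∈ e.erase l, x i =
      (if j ∈ e then x j else 1) * ∏ i ∈ (e.erase l).erase j, x i := by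
    rw [prod_eq_ite_mul_prod_erase _ x j]
    simp only [mem_erase, ne_eq, hjl, not_false_eq_true, true_and]
  have hx_j : ∏ i ∈ e.erase j, x i =
      (if l ∈ e then x l else 1) * ∏ i ∈ (e.erase l).erase j, x i := by
    rw [prod_eq_ite_mul_prod_erase _ x l, erase_right_comm]
    simp only [mem_erase, ne_eq, hjl.symm, not_false_eq_true, true_and]
  have hyl : y l = x l + ε := by simp [y, hjl.symm]
  have hyj : y j = x j - ε := by simp [y, hjl]
  rw [hsplit y, hsplit x, hrest, hx_l, hx_j, hyl, hyj]
  by_cases hl : l ∈ e <;> by_cases hj : j ∈ e <;> simp only [hl, hj, and_self, and_true,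
    and_false, if_true, if_false] <;> ring

theorem lagrangePolyDeriv_le_of_isMaxOn [Fintype V] (hx : x ∈ stdSimplex ℝ V)
    (hmax : IsMaxOn (lagrangePoly H) (stdSimplex ℝ V) x) {j : V} (hj : 0 < x j) (l : V) :
    lagrangePolyDeriv H x l ≤ lagrangePolyDeriv H x j := by
  rcases eq_or_ne j l with rfl | hjl
  · rfl
  by_contra! hlt
  set c := lagrangePolyDeriv H x l - lagrangePolyDeriv H x j
  set E := lagrangePolyDeriv₂ H x l j
  have hc : 0 < c := sub_pos.mpr hlt
  have hE : 0 ≤ E := lagrangePolyDeriv₂_nonneg hx.1 l j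
  -- `ε ≤ x j` keeps the transferred point in the simplex, and `ε * E < c` makes the gain positive.
  set ε := min (x j) (c / (E + 1))
  have hε : 0 < ε := lt_min hj (by positivity)
  have hεE : ε * E < c := by
    have : ε * (E + 1) ≤ c := (le_div_iff₀ (by positivity)).mp (min_le_right _ _)
    nlinarith
  set y : V → ℝ := fun i => x i + (if i = l then ε else 0) - (if i = j then ε else 0)
  have hy : y ∈ stdSimplex ℝ V := by
    refine ⟨fun i => ?_, ?_⟩
    · by_cases hil : i = l
      · subst hil
        simp only [y, if_true, hjl.symm, if_false]
        linarith [hx.1 i]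
      by_cases hij : i = j
      · subst hij
        simp only [y, if_true, hil, if_false]
        linarith [min_le_left (x i) (c / (E + 1))]
      simp only [y, hil, hij, if_false]
      linarith [hx.1 i]
    · simp [y, sum_add_distrib, sum_sub_distrib, hx.2]
  have := isMaxOn_iff.mp hmax y hy
  rw [lagrangePoly_transfer hjl] at this
  nlinarith

theorem lagrangePoly_pos_of_isMaxOn [Fintype V] (huniform : ∀ e ∈ H, e.card = r) (hr : 0 < r)
    (hH : H.Nonempty) (hmax : IsMaxOn (lagrangePoly H) (stdSimplex ℝ V) x) :
    0 < lagrangePoly H x := by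
  obtain ⟨e, he⟩ := hH
  set y : V → ℝ := fun i => if i ∈ e then (r : ℝ)⁻¹ else 0
  have hy_nonneg (i : V) : 0 ≤ y i := by
    simp only [y]
    split_ifs <;> positivity
  have hy : y ∈ stdSimplex ℝ V := by
    refine ⟨hy_nonneg, ?_⟩
    rw [sum_ite_mem, univ_inter, sum_const, huniform e he, nsmul_eq_mul]
    exact mul_inv_cancel₀ (by positivity)
  calc 0 < (r : ℝ)⁻¹ ^ r := by positivity
    _ = ∏ i ∈ e, y i := by
        rw [prod_congr rfl fun i hi => if_pos hi, prod_const, huniform e he]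
    _ ≤ lagrangePoly H y :=
        single_le_sum (f := fun e => ∏ i ∈ e, y i)
          (fun _ _ => prod_nonneg fun i _ => hy_nonneg i) he
    _ ≤ lagrangePoly H x := isMaxOn_iff.mp hmax y hy

theorem lagrangePolyDeriv_eq_of_isMaxOn [Fintype V] (huniform : ∀ e ∈ H, e.card = r)
    (hx : x ∈ stdSimplex ℝ V) (hmax : IsMaxOn (lagrangePoly H) (stdSimplex ℝ V) x) {j : V}
    (hj : 0 < x j) : lagrangePolyDeriv H x j = r * lagrangePoly H x := by
  have hconst (m : V) : x m * lagrangePolyDeriv H x m = x m * lagrangePolyDeriv H x j := by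
    rcases (hx.1 m).eq_or_lt with hm | hm
    · rw [← hm, zero_mul, zero_mul]
    · rw [le_antisymm (lagrangePolyDeriv_le_of_isMaxOn hx hmax hm j)
        (lagrangePolyDeriv_le_of_isMaxOn hx hmax hj m)]
  rw [← sum_mul_lagrangePolyDeriv huniform, sum_congr rfl fun m _ => hconst m, ← sum_mul, hx.2,
    one_mul]

theorem le_one_div_of_isMaxOn [Fintype V] (huniform : ∀ e ∈ H, e.card = r) (hr : 0 < r)
    (hH : H.Nonempty) (hx : x ∈ stdSimplex ℝ V)
    (hmax : IsMaxOn (lagrangePoly H) (stdSimplex ℝ V) x) (k : V) : x k ≤ 1 / r := by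
  rcases (hx.1 k).eq_or_lt with hk | hk
  · rw [← hk]
    positivity
  set M := r * lagrangePoly H x with hM_def
  have hM : 0 < M := mul_pos (by positivity) (lagrangePoly_pos_of_isMaxOn huniform hr hH hmax)
  have hstep (j : V) (hj : j ∈ univ.erase k) :
      x k * (x j * lagrangePolyDeriv₂ H x j k) ≤ x j * M := by
    rcases (hx.1 j).eq_or_lt with hj0 | hj0
    · simp [← hj0]
    rw [mul_left_comm, hM_def, ← lagrangePolyDeriv_eq_of_isMaxOn huniform hx hmax hj0]
    exact mul_le_mul_of_nonneg_left (mul_lagrangePolyDeriv₂_le hx.1 (ne_of_mem_erase hj)) hj0.le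
  have hkey : x k * (r - 1) * M ≤ (1 - x k) * M :=
    calc x k * (r - 1) * M = x k * ((r - 1) * lagrangePolyDeriv H x k) := by
          rw [lagrangePolyDeriv_eq_of_isMaxOn huniform hx hmax hk]; ring
      _ = ∑ j ∈ univ.erase k, x k * (x j * lagrangePolyDeriv₂ H x j k) := by
          rw [← sum_erase_mul_lagrangePolyDeriv₂ huniform, mul_sum]
      _ ≤ ∑ j ∈ univ.erase k, x j * M := sum_le_sum hstep
      _ = (1 - x k) * M := by
          rw [← sum_mul, sum_erase_eq_sub (mem_univ k), hx.2]
  rw [le_div_iff₀ (by positivity)]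
  nlinarith [le_of_mul_le_mul_right hkey hM]

end LagrangePoly

theorem optimal_coordinates_small_general (n r : ℕ) (hr : 2 ≤ r) (hn : r ≤ n)
    (H : Finset (Finset (Fin n))) (huniform : ∀ e ∈ H, e.card = r)
    (hcov : ∀ u v : Fin n, u ≠ v → ∃ e ∈ H, u ∈ e ∧ v ∈ e)
    (x : Fin n → ℝ) (hnn : ∀ i, 0 ≤ x i) (hsum : ∑ i, x i = 1)
    (hopt : ∀ y : Fin n → ℝ, (∀ i, 0 ≤ y i) → ∑ i, y i = 1 →
      ∑ e ∈ H, ∏ i ∈ e, y i ≤ ∑ e ∈ H, ∏ i ∈ e, x i) :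
    ∀ i, x i ≤ 1 / (r : ℝ) := by
  obtain ⟨e, he, -⟩ := hcov ⟨0, by omega⟩ ⟨1, by omega⟩ (by simp [Fin.ext_iff])
  exact le_one_div_of_isMaxOn huniform (by omega) ⟨e, he⟩ ⟨hnn, hsum⟩
    (isMaxOn_iff.mpr fun y hy => hopt y hy.1 hy.2)

/-- If `H` is a `2`-covered `𝒯_r`-free `r`-graph on `[n]` and `x` is an optimal
solution for the Lagrangian of `H`, then every coordinate satisfies `x i ≤ 1/r`. -/
theorem optimal_coordinates_small (n r : ℕ) (hr : 2 ≤ r) (hn : r ≤ n)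
    (H : Finset (Finset (Fin n))) (huniform : ∀ e ∈ H, e.card = r)
    (hcov : ∀ u v : Fin n, u ≠ v → ∃ e ∈ H, u ∈ e ∧ v ∈ e)
    (hfree : TriangleFree H)
    (x : Fin n → ℝ) (hnn : ∀ i, 0 ≤ x i) (hsum : ∑ i, x i = 1)
    (hopt : ∀ y : Fin n → ℝ, (∀ i, 0 ≤ y i) → ∑ i, y i = 1 →
      ∑ e ∈ H, ∏ i ∈ e, y i ≤ ∑ e ∈ H, ∏ i ∈ e, x i) :
    ∀ i, x i ≤ 1 / (r : ℝ) :=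
  optimal_coordinates_small_general n r hr hn H huniform hcov x hnn hsum hopt
end

section
/- Let H be a 2-covered T_r-free r-graph on m vertices, and suppose (x₁,...,x_m) lies in the standard simplex with ∂_j P_H(x) ≥ 1/r^{r−1} − ε for every j ∈ [m], where ε ≤ 1/(2r^{r−1}). Then m ≤ 2r^{r−1}/(r−1)!. -/
private lemma sum_map_le' {ι κ : Type*} [DecidableEq κ] (P : Finset ι) (Q : Finset κ)
    (f : ι → κ) (hinj : Set.InjOn f P) (hmap : ∀ p ∈ P, f p ∈ Q)
    (g : κ → ℝ) (hg : ∀ q ∈ Q, 0 ≤ g q) :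
    ∑ p ∈ P, g (f p) ≤ ∑ q ∈ Q, g q := by
  rw [← Finset.sum_image (fun a ha b hb => hinj ha hb)]
  exact Finset.sum_le_sum_of_subset_of_nonneg
    (Finset.image_subset_iff.mpr hmap) (fun q hq _ => hg q hq)

private lemma esymm_le' (m : ℕ) (x : Fin m → ℝ) (hnn : ∀ i, 0 ≤ x i) (k : ℕ) :
    (k.factorial : ℝ) * ∑ S ∈ Finset.powersetCard k (Finset.univ : Finset (Fin m)),
      ∏ i ∈ S, x i ≤ (∑ i, x i) ^ k := by
  have hx : 0 ≤ ∑ i, x i := Finset.sum_nonneg fun i _ => hnn i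
  induction k with
  | zero => simp
  | succ k ih =>
    have key : ((k : ℝ) + 1) *
        ∑ S ∈ Finset.powersetCard (k + 1) (Finset.univ : Finset (Fin m)), ∏ i ∈ S, x i ≤
        (∑ S ∈ Finset.powersetCard k (Finset.univ : Finset (Fin m)), ∏ i ∈ S, x i) *
          (∑ i, x i) := by
      have step1 : ((k : ℝ) + 1) *
          ∑ S ∈ Finset.powersetCard (k + 1) (Finset.univ : Finset (Fin m)), ∏ i ∈ S, x i =
          ∑ S ∈ Finset.powersetCard (k + 1) (Finset.univ : Finset (Fin m)),
            ∑ j ∈ S, x j * ∏ i ∈ S.erase j, x i := by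
        rw [Finset.mul_sum]
        refine Finset.sum_congr rfl fun S hS => ?_
        have hcard : S.card = k + 1 := (Finset.mem_powersetCard.mp hS).2
        have : ∀ j ∈ S, x j * ∏ i ∈ S.erase j, x i = ∏ i ∈ S, x i :=
          fun j hj => Finset.mul_prod_erase S x hj
        rw [Finset.sum_congr rfl this, Finset.sum_const, hcard, nsmul_eq_mul]
        push_cast
        ring
      rw [step1]
      -- swap the double sum
      have swap : ∑ S ∈ Finset.powersetCard (k + 1) (Finset.univ : Finset (Fin m)),
          ∑ j ∈ S, x j * ∏ i ∈ S.erase j, x i =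
          ∑ j : Fin m, ∑ S ∈ (Finset.powersetCard (k + 1)
              (Finset.univ : Finset (Fin m))).filter (fun S => j ∈ S),
            x j * ∏ i ∈ S.erase j, x i := by
        simp_rw [Finset.sum_filter]
        rw [Finset.sum_comm]
        refine Finset.sum_congr rfl fun S hS => ?_
        rw [← Finset.sum_filter, Finset.filter_univ_mem]
      rw [swap]
      have hmul : ∀ j : Fin m,
          ∑ S ∈ (Finset.powersetCard (k + 1)
              (Finset.univ : Finset (Fin m))).filter (fun S => j ∈ S),
            x j * ∏ i ∈ S.erase j, x i ≤
          x j * ∑ S ∈ Finset.powersetCard k (Finset.univ : Finset (Fin m)),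
            ∏ i ∈ S, x i := by
        intro j
        rw [← Finset.mul_sum]
        refine mul_le_mul_of_nonneg_left ?_ (hnn j)
        refine sum_map_le' _ _ (fun S : Finset (Fin m) => S.erase j) ?_ ?_ (fun S => ∏ i ∈ S, x i) ?_
        · intro S hS T hT h
          simp only [Finset.coe_filter, Set.mem_setOf_eq] at hS hT
          have h' : S.erase j = T.erase j := h
          rw [← Finset.insert_erase hS.2, ← Finset.insert_erase hT.2, h']
        · intro S hS
          rw [Finset.mem_filter, Finset.mem_powersetCard] at hS
          rw [Finset.mem_powersetCard]
          refine ⟨Finset.subset_univ _, ?_⟩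
          rw [Finset.card_erase_of_mem hS.2, hS.1.2]
          omega
        · intro S _
          exact Finset.prod_nonneg fun i _ => hnn i
      calc ∑ j : Fin m, ∑ S ∈ (Finset.powersetCard (k + 1)
              (Finset.univ : Finset (Fin m))).filter (fun S => j ∈ S),
            x j * ∏ i ∈ S.erase j, x i
          ≤ ∑ j : Fin m, x j * ∑ S ∈ Finset.powersetCard k
              (Finset.univ : Finset (Fin m)), ∏ i ∈ S, x i :=
            Finset.sum_le_sum fun j _ => hmul j
        _ = (∑ S ∈ Finset.powersetCard k (Finset.univ : Finset (Fin m)),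
              ∏ i ∈ S, x i) * (∑ i, x i) := by rw [← Finset.sum_mul]; ring
    have hfac : (0 : ℝ) ≤ (k.factorial : ℕ) := Nat.cast_nonneg _
    calc ((k + 1).factorial : ℝ) *
          ∑ S ∈ Finset.powersetCard (k + 1) (Finset.univ : Finset (Fin m)),
            ∏ i ∈ S, x i
        = (k.factorial : ℝ) * (((k : ℝ) + 1) *
            ∑ S ∈ Finset.powersetCard (k + 1) (Finset.univ : Finset (Fin m)),
              ∏ i ∈ S, x i) := by
          rw [Nat.factorial_succ]; push_cast; ring
      _ ≤ (k.factorial : ℝ) *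
            ((∑ S ∈ Finset.powersetCard k (Finset.univ : Finset (Fin m)),
              ∏ i ∈ S, x i) * (∑ i, x i)) := by
          exact mul_le_mul_of_nonneg_left key hfac
      _ = ((k.factorial : ℝ) *
            ∑ S ∈ Finset.powersetCard k (Finset.univ : Finset (Fin m)),
              ∏ i ∈ S, x i) * (∑ i, x i) := by ring
      _ ≤ (∑ i, x i) ^ k * (∑ i, x i) := mul_le_mul_of_nonneg_right ih hx
      _ = (∑ i, x i) ^ (k + 1) := by ring

/-- If `H` is a `2`-covered `𝒯_r`-free `r`-graph on `[m]`, `x` lies in the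
standard simplex, `ε ≤ 1/(2r^{r-1})`, and `∂_j P_H(x) ≥ 1/r^{r-1} − ε` for all
`j ∈ [m]`, then `m ≤ 2 r^{r-1}/(r-1)!`. -/
theorem bounded_number_of_parts (r m : ℕ) (hr : 2 ≤ r)
    (H : Finset (Finset (Fin m))) (huniform : ∀ e ∈ H, e.card = r)
    (hcov : ∀ u v : Fin m, u ≠ v → ∃ e ∈ H, u ∈ e ∧ v ∈ e)
    (hfree : TriangleFree H)
    (x : Fin m → ℝ) (hnn : ∀ i, 0 ≤ x i) (hsum : ∑ i, x i = 1)
    (ε : ℝ) (hε : ε ≤ 1 / (2 * (r : ℝ) ^ (r - 1)))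
    (hdeg : ∀ j : Fin m, 1 / (r : ℝ) ^ (r - 1) - ε ≤
      ∑ e ∈ H.filter (fun e => j ∈ e), ∏ i ∈ e.erase j, x i) :
    (m : ℝ) ≤ 2 * (r : ℝ) ^ (r - 1) / ((r - 1).factorial : ℝ) := by
  set R : ℝ := (r : ℝ) ^ (r - 1) with hR
  have hRpos : 0 < R := by
    apply pow_pos
    have : (0 : ℝ) < 2 := by norm_num
    exact lt_of_lt_of_le this (by exact_mod_cast hr)
  have hFpos : (0 : ℝ) < ((r - 1).factorial : ℝ) := by
    exact_mod_cast Nat.factorial_pos (r - 1)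
  -- the total sum of "partial derivatives"
  set LHS : ℝ := ∑ j : Fin m, ∑ e ∈ H.filter (fun e => j ∈ e), ∏ i ∈ e.erase j, x i
    with hLHS
  -- lower bound
  have hlow : (m : ℝ) * (1 / R - ε) ≤ LHS := by
    calc (m : ℝ) * (1 / R - ε) = ∑ _j : Fin m, (1 / R - ε) := by
          rw [Finset.sum_const, Finset.card_univ, Fintype.card_fin, nsmul_eq_mul]
      _ ≤ LHS := Finset.sum_le_sum fun j _ => hdeg j
  -- rewrite LHS as a sum over pairs
  set P : Finset (Fin m × Finset (Fin m)) :=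
    (Finset.univ ×ˢ H).filter (fun p => p.1 ∈ p.2) with hP
  have hpairs : LHS = ∑ p ∈ P, ∏ i ∈ p.2.erase p.1, x i := by
    rw [hP, Finset.sum_filter, Finset.sum_product, hLHS]
    exact Finset.sum_congr rfl fun j _ => by rw [Finset.sum_filter]
  -- upper bound via injection into (r-1)-subsets
  have hup : LHS ≤ ∑ S ∈ Finset.powersetCard (r - 1)
      (Finset.univ : Finset (Fin m)), ∏ i ∈ S, x i := by
    rw [hpairs]
    refine sum_map_le' _ _ (fun p : Fin m × Finset (Fin m) => p.2.erase p.1) ?_ ?_ (fun S => ∏ i ∈ S, x i) ?_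
    · -- injectivity, using triangle-freeness and the covering property
      intro p hp q hq h
      simp only [hP, Finset.coe_filter, Finset.mem_product, Finset.mem_univ,
        true_and, Set.mem_setOf_eq] at hp hq
      obtain ⟨j, e⟩ := p
      obtain ⟨j', e'⟩ := q
      simp only at hp hq h ⊢
      obtain ⟨heH, hje⟩ := hp
      obtain ⟨heH', hje'⟩ := hq
      by_cases hjj : j = j'
      · subst hjj
        have : e = e' := by
          rw [← Finset.insert_erase hje, ← Finset.insert_erase hje', h]
        simp [this]
      · exfalso
        have hjS : j ∉ e.erase j := Finset.notMem_erase j e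
        have hj'S : j' ∉ e.erase j := by rw [h]; exact Finset.notMem_erase j' e'
        have he : e = insert j (e.erase j) := (Finset.insert_erase hje).symm
        have he' : e' = insert j' (e.erase j) := by
          rw [h]; exact (Finset.insert_erase hje').symm
        have hjne' : j ∉ e' := by
          rw [he', Finset.mem_insert]
          push_neg
          exact ⟨hjj, hjS⟩
        have hj'ne : j' ∉ e := by
          rw [he, Finset.mem_insert]
          push_neg
          exact ⟨fun hh => hjj hh.symm, hj'S⟩
        obtain ⟨D, hDH, hjD, hj'D⟩ := hcov j j' hjj
        apply hfree
        refine ⟨e, heH, D, hDH, e', heH', ?_, ?_, ?_, ?_, ?_⟩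
        · intro hh; rw [hh] at hj'ne; exact hj'ne hj'D
        · intro hh; rw [← hh] at hjne'; exact hjne' hje
        · intro hh; rw [hh] at hjD; exact hjne' hjD
        · intro a ha
          rw [he, Finset.mem_insert] at ha
          rcases ha with rfl | ha
          · exact Finset.mem_union_left _ hjD
          · refine Finset.mem_union_right _ ?_
            rw [he', Finset.mem_insert]; exact Or.inr ha
        · exact ⟨j', by
            rw [Finset.mem_sdiff, Finset.mem_inter]
            exact ⟨⟨hj'D, hje'⟩, hj'ne⟩⟩
    · intro p hp
      simp only [hP, Finset.mem_filter, Finset.mem_product] at hp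
      rw [Finset.mem_powersetCard]
      refine ⟨Finset.subset_univ _, ?_⟩
      rw [Finset.card_erase_of_mem hp.2, huniform _ hp.1.2]
    · intro S _
      exact Finset.prod_nonneg fun i _ => hnn i
  -- the Maclaurin-type bound
  have hmac : ∑ S ∈ Finset.powersetCard (r - 1)
      (Finset.univ : Finset (Fin m)), ∏ i ∈ S, x i ≤ 1 / ((r - 1).factorial : ℝ) := by
    have := esymm_le' m x hnn (r - 1)
    rw [hsum, one_pow] at this
    rw [le_div_iff₀ hFpos]
    linarith
  -- combine
  have h1 : (m : ℝ) * (1 / (2 * R)) ≤ 1 / ((r - 1).factorial : ℝ) := by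
    have h2 : 1 / (2 * R) ≤ 1 / R - ε := by
      have : 1 / R - 1 / (2 * R) = 1 / (2 * R) := by field_simp; ring
      linarith
    have hm0 : (0 : ℝ) ≤ (m : ℝ) := Nat.cast_nonneg m
    calc (m : ℝ) * (1 / (2 * R)) ≤ (m : ℝ) * (1 / R - ε) :=
          mul_le_mul_of_nonneg_left h2 hm0
      _ ≤ LHS := hlow
      _ ≤ _ := le_trans hup hmac
  have h2Rpos : (0 : ℝ) < 2 * R := by linarith
  rw [mul_one_div, div_le_div_iff₀ h2Rpos hFpos, one_mul] at h1
  rw [le_div_iff₀ hFpos]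
  linarith
end

section
/- Let H be an n-vertex T_{r,1}-free r-graph with δ(H) ≥ n^{r−1}/r^{r−1} − ε n^{r−1} (ε sufficiently small, n sufficiently large), let v* be a vertex such that H − v* is r-partite with parts V₁,...,V_r each of size within ε₁n of n/r. Then for every e in the link of v* and every i ∈ [r], |e ∩ V_i| ≤ 1. -/
set_option maxHeartbeats 1000000

section Aux
variable {n r : ℕ}

lemma pow_bound_aux (r : ℕ) (hr : 2 ≤ r) : (1 + 1/(3*(r:ℝ)))^(r-1) ≤ 3/2 := by
  have hrR : (2:ℝ) ≤ (r:ℝ) := by exact_mod_cast hr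
  set x : ℝ := 1/(3*(r:ℝ)) with hxdef
  have hx0 : 0 < x := by rw [hxdef]; positivity
  have hx6 : x ≤ 1/6 := by
    rw [hxdef, div_le_div_iff₀ (by linarith) (by norm_num)]
    linarith
  have hmx : ((r-1:ℕ):ℝ) * x ≤ 1/3 := by
    have h1 : ((r-1:ℕ):ℝ) ≤ (r:ℝ) := by exact_mod_cast Nat.sub_le r 1
    have h2 : ((r-1:ℕ):ℝ) * x ≤ (r:ℝ) * x := by nlinarith
    have h3 : (r:ℝ) * x = 1/3 := by rw [hxdef]; field_simp
    linarith
  have h1 : 1 - ((r-1:ℕ):ℝ) * x ≤ (1 - x)^(r-1) := by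
    have h := one_add_mul_le_pow (a := -x) (by linarith) (r-1)
    have e : (1 + -x) = 1 - x := by ring
    rw [e] at h
    linarith
  have h2 : (2/3:ℝ) ≤ (1-x)^(r-1) := by linarith
  have h3 : (1+x)^(r-1) * (1-x)^(r-1) ≤ 1 := by
    rw [← mul_pow]
    have e : (1+x)*(1-x) = 1 - x^2 := by ring
    rw [e]
    exact pow_le_one₀ (by nlinarith) (by nlinarith)
  nlinarith [pow_nonneg (by linarith : (0:ℝ) ≤ 1+x) (r-1)]

lemma pair_bound_aux {H : Finset (Finset (Fin n))}
    (hcard : ∀ e ∈ H, e.card = r) (v w : Fin n) (hvw : v ≠ w) :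
    (H.filter (fun X => v ∈ X ∧ w ∈ X)).card ≤ n ^ (r - 2) := by
  classical
  have h1 : (H.filter (fun X => v ∈ X ∧ w ∈ X)).card ≤
      ((Finset.univ : Finset (Fin n)).powersetCard (r-2)).card := by
    apply Finset.card_le_card_of_injOn (fun X => (X.erase v).erase w)
    · intro X hX
      simp only [Finset.mem_coe, Finset.mem_filter] at hX ⊢
      obtain ⟨hXH, hv, hw⟩ := hX
      rw [Finset.mem_powersetCard]
      refine ⟨Finset.subset_univ _, ?_⟩
      rw [Finset.card_erase_of_mem (Finset.mem_erase.mpr ⟨Ne.symm hvw, hw⟩),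
        Finset.card_erase_of_mem hv, hcard X hXH]
      omega
    · intro X hX Y hY hXY
      simp only [Finset.mem_coe, Finset.mem_filter] at hX hY
      have hwX : w ∈ X.erase v := Finset.mem_erase.mpr ⟨Ne.symm hvw, hX.2.2⟩
      have hwY : w ∈ Y.erase v := Finset.mem_erase.mpr ⟨Ne.symm hvw, hY.2.2⟩
      have h : X.erase v = Y.erase v := by
        rw [← Finset.insert_erase hwX, ← Finset.insert_erase hwY]
        simp only at hXY
        rw [hXY]
      rw [← Finset.insert_erase hX.2.1, ← Finset.insert_erase hY.2.1, h]
  calc (H.filter (fun X => v ∈ X ∧ w ∈ X)).card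
      ≤ ((Finset.univ : Finset (Fin n)).powersetCard (r-2)).card := h1
    _ = n.choose (r-2) := by
        rw [Finset.card_powersetCard, Finset.card_univ, Fintype.card_fin]
    _ ≤ n ^ (r-2) := Nat.choose_le_pow n (r-2)

lemma degree_split_aux {H : Finset (Finset (Fin n))}
    (hcard : ∀ e ∈ H, e.card = r) {e : Finset (Fin n)} (hecard : e.card = r)
    (v : Fin n) (hv : v ∈ e) :
    (H.filter (fun X => v ∈ X)).card ≤
      (H.filter (fun X => X ∩ e = {v})).card + (r - 1) * n ^ (r - 2) := by
  classical
  have hsub : H.filter (fun X => v ∈ X) ⊆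
      H.filter (fun X => X ∩ e = {v}) ∪
        (e.erase v).biUnion (fun w => H.filter (fun X => v ∈ X ∧ w ∈ X)) := by
    intro X hX
    simp only [Finset.mem_filter] at hX
    obtain ⟨hXH, hvX⟩ := hX
    rw [Finset.mem_union]
    by_cases h : X ∩ e = {v}
    · exact Or.inl (Finset.mem_filter.mpr ⟨hXH, h⟩)
    · right
      have hvXe : v ∈ X ∩ e := Finset.mem_inter.mpr ⟨hvX, hv⟩
      have hex : ∃ w ∈ X ∩ e, w ≠ v := by
        by_contra hc
        push_neg at hc
        exact h (Finset.eq_singleton_iff_unique_mem.mpr ⟨hvXe, hc⟩)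
      obtain ⟨w, hw, hwv⟩ := hex
      rw [Finset.mem_inter] at hw
      exact Finset.mem_biUnion.mpr ⟨w, Finset.mem_erase.mpr ⟨hwv, hw.2⟩,
        Finset.mem_filter.mpr ⟨hXH, hvX, hw.1⟩⟩
  calc (H.filter (fun X => v ∈ X)).card
      ≤ (H.filter (fun X => X ∩ e = {v}) ∪
          (e.erase v).biUnion (fun w => H.filter (fun X => v ∈ X ∧ w ∈ X))).card :=
        Finset.card_le_card hsub
    _ ≤ (H.filter (fun X => X ∩ e = {v})).card +
          ((e.erase v).biUnion (fun w => H.filter (fun X => v ∈ X ∧ w ∈ X))).card :=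
        Finset.card_union_le _ _
    _ ≤ (H.filter (fun X => X ∩ e = {v})).card + (r - 1) * n ^ (r - 2) := by
        gcongr
        calc ((e.erase v).biUnion (fun w => H.filter (fun X => v ∈ X ∧ w ∈ X))).card
            ≤ ∑ w ∈ e.erase v, (H.filter (fun X => v ∈ X ∧ w ∈ X)).card :=
              Finset.card_biUnion_le
          _ ≤ ∑ _w ∈ e.erase v, n ^ (r - 2) := by
              apply Finset.sum_le_sum
              intro w hw
              exact pair_bound_aux hcard v w (Ne.symm (Finset.mem_erase.mp hw).1)
          _ = (r - 1) * n ^ (r - 2) := by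
              rw [Finset.sum_const, smul_eq_mul, Finset.card_erase_of_mem hv, hecard]

end Aux

/-- An `r`-graph `H` is `𝕋_{r,1}`-free if it contains no copy of the triangle
`𝕋_{r,1}`, whose edges are `{1,…,r}`, `{1} ∪ {r+1,…,2r−1}` and
`{2,…,r} ∪ {r+1}` (the case `i = 1` of `𝕋_{r,i}`). -/
def Tr1Free (r : ℕ) {V : Type*} [DecidableEq V] (H : Finset (Finset V)) : Prop :=
  ¬ ∃ f : ℕ → V, Set.InjOn f (Set.Icc 1 (2 * r - 1)) ∧
      (Finset.Icc 1 r).image f ∈ H ∧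
      ((insert 1 (Finset.Icc (r + 1) (2 * r - 1))).image f) ∈ H ∧
      ((insert (r + 1) (Finset.Icc 2 r)).image f) ∈ H

lemma tr1_witness {n r : ℕ} (hr : 2 ≤ r) {H : Finset (Finset (Fin n))}
    (hfree : Tr1Free r H) {e T : Finset (Fin n)} {x y : Fin n}
    (hx : x ∈ e) (hy : y ∈ e) (hxy : x ≠ y) (he : e ∈ H)
    (hecard : e.card = r) (hT : ∀ u ∈ T, u ∉ e) (hTcard : T.card = r - 1)
    (h1 : insert x T ∈ H) (h2 : insert y T ∈ H) : False := by
  classical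
  apply hfree
  set R := (e.erase x).erase y with hRdef
  have hyex : y ∈ e.erase x := Finset.mem_erase.mpr ⟨Ne.symm hxy, hy⟩
  have hRcard : R.card = r - 2 := by
    rw [hRdef, Finset.card_erase_of_mem hyex, Finset.card_erase_of_mem hx, hecard]
    omega
  have hRe : ∀ u ∈ R, u ∈ e := fun u hu =>
    Finset.mem_of_mem_erase (Finset.mem_of_mem_erase hu)
  have hxR : x ∉ R := fun h => (Finset.mem_erase.mp (Finset.mem_of_mem_erase h)).1 rfl
  have hyR : y ∉ R := fun h => (Finset.mem_erase.mp h).1 rfl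
  have hxT : x ∉ T := fun h => hT x h hx
  have hyT : y ∉ T := fun h => hT y h hy
  set tL := T.toList with htL
  set rL := R.toList with hrL
  have hndT : tL.Nodup := by rw [htL]; exact T.nodup_toList
  have hndR : rL.Nodup := by rw [hrL]; exact R.nodup_toList
  have hTlen : tL.length = r - 1 := by rw [htL, Finset.length_toList, hTcard]
  have hRlen : rL.length = r - 2 := by rw [hrL, Finset.length_toList, hRcard]
  set f : ℕ → Fin n := fun m =>
    if m = 1 then x else if m ≤ r then tL.getD (m - 2) x
    else if m = r + 1 then y else rL.getD (m - (r + 2)) x with hf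
  have f1 : f 1 = x := by simp [hf]
  have fr1 : f (r + 1) = y := by
    simp only [hf]
    split_ifs with h1 h2
    · exact absurd h1 (by omega)
    · exact absurd h2 (by omega)
    · rfl
  have fT : ∀ m, 2 ≤ m → m ≤ r → ∃ h : m - 2 < tL.length, f m = tL[m - 2] := by
    intro m hm2 hm3
    have hlt : m - 2 < tL.length := by rw [hTlen]; omega
    refine ⟨hlt, ?_⟩
    simp only [hf]
    rw [if_neg (by omega), if_pos hm3, List.getD_eq_getElem _ _ hlt]
  have fR : ∀ m, r + 2 ≤ m → m ≤ 2 * r - 1 →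
      ∃ h : m - (r + 2) < rL.length, f m = rL[m - (r + 2)] := by
    intro m hm2 hm3
    have hlt : m - (r + 2) < rL.length := by rw [hRlen]; omega
    refine ⟨hlt, ?_⟩
    simp only [hf]
    rw [if_neg (by omega), if_neg (by omega), if_neg (by omega),
      List.getD_eq_getElem _ _ hlt]
  have fTmem : ∀ m, 2 ≤ m → m ≤ r → f m ∈ T := by
    intro m hm2 hm3
    obtain ⟨h, hh⟩ := fT m hm2 hm3
    rw [hh, ← Finset.mem_toList]
    exact List.getElem_mem h
  have fRmem : ∀ m, r + 2 ≤ m → m ≤ 2 * r - 1 → f m ∈ R := by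
    intro m hm2 hm3
    obtain ⟨h, hh⟩ := fR m hm2 hm3
    rw [hh, ← Finset.mem_toList]
    exact List.getElem_mem h
  have injT : ∀ a b, 2 ≤ a → a ≤ r → 2 ≤ b → b ≤ r → f a = f b → a = b := by
    intro a b ha1 ha2 hb1 hb2 hab
    obtain ⟨hia, ea⟩ := fT a ha1 ha2
    obtain ⟨hib, eb⟩ := fT b hb1 hb2
    rw [ea, eb] at hab
    have := (hndT.getElem_inj_iff).mp hab
    omega
  have injR : ∀ a b, r + 2 ≤ a → a ≤ 2 * r - 1 → r + 2 ≤ b → b ≤ 2 * r - 1 →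
      f a = f b → a = b := by
    intro a b ha1 ha2 hb1 hb2 hab
    obtain ⟨hia, ea⟩ := fR a ha1 ha2
    obtain ⟨hib, eb⟩ := fR b hb1 hb2
    rw [ea, eb] at hab
    have := (hndR.getElem_inj_iff).mp hab
    omega
  have imgT : (Finset.Icc 2 r).image f = T := by
    have hsub : (Finset.Icc 2 r).image f ⊆ T := by
      intro u hu
      obtain ⟨m, hm, rfl⟩ := Finset.mem_image.mp hu
      rw [Finset.mem_Icc] at hm
      exact fTmem m hm.1 hm.2
    have hinj : Set.InjOn f ↑(Finset.Icc 2 r) := by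
      intro a ha b hb hab
      simp only [Finset.coe_Icc, Set.mem_Icc] at ha hb
      exact injT a b ha.1 ha.2 hb.1 hb.2 hab
    refine Finset.eq_of_subset_of_card_le hsub ?_
    rw [Finset.card_image_of_injOn hinj, Nat.card_Icc, hTcard]
    omega
  have imgR : (Finset.Icc (r + 2) (2 * r - 1)).image f = R := by
    have hsub : (Finset.Icc (r + 2) (2 * r - 1)).image f ⊆ R := by
      intro u hu
      obtain ⟨m, hm, rfl⟩ := Finset.mem_image.mp hu
      rw [Finset.mem_Icc] at hm
      exact fRmem m hm.1 hm.2
    have hinj : Set.InjOn f ↑(Finset.Icc (r + 2) (2 * r - 1)) := by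
      intro a ha b hb hab
      simp only [Finset.coe_Icc, Set.mem_Icc] at ha hb
      exact injR a b ha.1 ha.2 hb.1 hb.2 hab
    refine Finset.eq_of_subset_of_card_le hsub ?_
    rw [Finset.card_image_of_injOn hinj, Nat.card_Icc, hRcard]
    omega
  refine ⟨f, ?_, ?_, ?_, ?_⟩
  · intro a ha b hb hab
    simp only [Set.mem_Icc] at ha hb
    have hcase : ∀ c : ℕ, 1 ≤ c → c ≤ 2 * r - 1 →
        c = 1 ∨ (2 ≤ c ∧ c ≤ r) ∨ c = r + 1 ∨ (r + 2 ≤ c ∧ c ≤ 2 * r - 1) := by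
      intro c hc1 hc2; omega
    rcases hcase a ha.1 ha.2 with ha' | ha' | ha' | ha' <;>
      rcases hcase b hb.1 hb.2 with hb' | hb' | hb' | hb'
    · omega
    · exfalso; apply hxT; rw [ha', f1] at hab; rw [hab]; exact fTmem b hb'.1 hb'.2
    · exfalso; apply hxy; rw [ha', f1] at hab; rw [hb', fr1] at hab; exact hab
    · exfalso; apply hxR; rw [ha', f1] at hab; rw [hab]; exact fRmem b hb'.1 hb'.2
    · exfalso; apply hxT; rw [hb', f1] at hab; rw [← hab]; exact fTmem a ha'.1 ha'.2
    · exact injT a b ha'.1 ha'.2 hb'.1 hb'.2 hab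
    · exfalso; apply hyT; rw [hb', fr1] at hab; rw [← hab]; exact fTmem a ha'.1 ha'.2
    · exfalso
      exact hT (f a) (fTmem a ha'.1 ha'.2) (by rw [hab]; exact hRe _ (fRmem b hb'.1 hb'.2))
    · exfalso; apply hxy; rw [ha', fr1] at hab; rw [hb', f1] at hab; exact hab.symm
    · exfalso; apply hyT; rw [ha', fr1] at hab; rw [hab]; exact fTmem b hb'.1 hb'.2
    · omega
    · exfalso; apply hyR; rw [ha', fr1] at hab; rw [hab]; exact fRmem b hb'.1 hb'.2
    · exfalso; apply hxR; rw [hb', f1] at hab; rw [← hab]; exact fRmem a ha'.1 ha'.2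
    · exfalso
      exact hT (f b) (fTmem b hb'.1 hb'.2) (by rw [← hab]; exact hRe _ (fRmem a ha'.1 ha'.2))
    · exfalso; apply hyR; rw [hb', fr1] at hab; rw [← hab]; exact fRmem a ha'.1 ha'.2
    · exact injR a b ha'.1 ha'.2 hb'.1 hb'.2 hab
  · have hI1 : Finset.Icc 1 r = insert 1 (Finset.Icc 2 r) := by
      ext m; simp only [Finset.mem_Icc, Finset.mem_insert]; omega
    rw [hI1, Finset.image_insert, f1, imgT]
    exact h1
  · have hI2 : Finset.Icc (r + 1) (2 * r - 1) =
        insert (r + 1) (Finset.Icc (r + 2) (2 * r - 1)) := by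
      ext m; simp only [Finset.mem_Icc, Finset.mem_insert]; omega
    rw [hI2, Finset.image_insert, Finset.image_insert, f1, fr1, imgR, hRdef,
      Finset.insert_erase hyex, Finset.insert_erase hx]
    exact he
  · rw [Finset.image_insert, fr1, imgT]
    exact h2

/-- If `H` is a `𝕋_{r,1}`-free `r`-graph on `n` vertices with
`δ(H) ≥ n^{r-1}/r^{r-1} − ε n^{r-1}`, and `v⋆` is a vertex such that `H − v⋆` is
`r`-partite with parts `V₁, …, V_r` (classes of the colouring `P`, restricted
away from `v⋆`) of sizes within `ε₁ n` of `n/r`, then every member of the link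
of `v⋆` meets every part in at most one vertex. -/
theorem link_respects_partition :
    ∀ r : ℕ, 2 ≤ r → ∃ ε > (0 : ℝ), ∃ ε₁ > (0 : ℝ), ∃ N : ℕ, ∀ n : ℕ, N ≤ n →
      ∀ H : Finset (Finset (Fin n)), (∀ e ∈ H, e.card = r) → Tr1Free r H →
        (∀ v : Fin n, (n : ℝ) ^ (r - 1) / (r : ℝ) ^ (r - 1) - ε * (n : ℝ) ^ (r - 1) ≤
          ((H.filter (fun e => v ∈ e)).card : ℝ)) →
        ∀ vstar : Fin n, ∀ P : Fin n → Fin r,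
          (∀ e ∈ H, vstar ∉ e → ∀ k : Fin r, (e.filter (fun u => P u = k)).card = 1) →
          (∀ k : Fin r,
            |((Finset.univ.filter (fun u : Fin n => P u = k ∧ u ≠ vstar)).card : ℝ) -
              (n : ℝ) / (r : ℝ)| ≤ ε₁ * n) →
          ∀ e ∈ H, vstar ∈ e →
            ∀ k : Fin r, ((e.erase vstar).filter (fun u => P u = k)).card ≤ 1 := by
  intro r hr
  have hrpos : (0:ℝ) < (r:ℝ) := by exact_mod_cast (by omega : 0 < r)
  have hq0 : (0:ℝ) < (r:ℝ)^(r-1) := pow_pos hrpos _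
  refine ⟨1/(8*(r:ℝ)^(r-1)), div_pos one_pos (by linarith),
    1/(3*(r:ℝ)^2), div_pos one_pos (by nlinarith), 8*r^r + 1, ?_⟩
  intro n hn H hcard hfree hdeg vstar P hpart hsize e he hv k
  by_contra hk
  push_neg at hk
  obtain ⟨x, hxmem, y, hymem, hxy⟩ := Finset.one_lt_card.mp hk
  simp only [Finset.mem_filter, Finset.mem_erase] at hxmem hymem
  obtain ⟨⟨hxv, hxe⟩, hPx⟩ := hxmem
  obtain ⟨⟨hyv, hye⟩, hPy⟩ := hymem
  have hecard := hcard e he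
  have key : ∀ T : Finset (Fin n), (∀ u ∈ T, u ∉ e) → T.card = r - 1 →
      insert x T ∈ H → insert y T ∈ H → False := fun T a b c d =>
    tr1_witness hr hfree hxe hye hxy he hecard a b c d
  classical
  set V : Fin r → Finset (Fin n) :=
    fun j => Finset.univ.filter (fun u => P u = j ∧ u ≠ vstar) with hV
  set W : Fin r → Finset (Fin n) := fun j => if j = k then {x} else V j with hW
  set φ : Finset (Fin n) → (Fin r → Fin n) := fun X j =>
    if j = k then x else (X.filter (fun u => P u = j)).toList.headD x with hφ
  have struct : ∀ v : Fin n, v ∈ e → v ≠ vstar → P v = k → ∀ X, X ∈ H → X ∩ e = {v} →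
      v ∈ X ∧ X.erase v = (Finset.univ.erase k).image (φ X) ∧ (∀ j, φ X j ∈ W j) := by
    intro v hve hvv hPv X hXH hXe
    have hvX : v ∈ X := by
      have h := Finset.mem_singleton_self v
      rw [← hXe] at h
      exact (Finset.mem_inter.mp h).1
    have hvsX : vstar ∉ X := by
      intro h
      have h2 : vstar ∈ X ∩ e := Finset.mem_inter.mpr ⟨h, hv⟩
      rw [hXe, Finset.mem_singleton] at h2
      exact hvv h2.symm
    have hone := hpart X hXH hvsX
    have hfk : X.filter (fun u => P u = k) = {v} := by
      obtain ⟨u, hu⟩ := Finset.card_eq_one.mp (hone k)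
      have hm : v ∈ X.filter (fun u => P u = k) := Finset.mem_filter.mpr ⟨hvX, hPv⟩
      rw [hu, Finset.mem_singleton] at hm
      rw [hu, hm]
    have hφj : ∀ j, j ≠ k → X.filter (fun u => P u = j) = {φ X j} := by
      intro j hj
      obtain ⟨u, hu⟩ := Finset.card_eq_one.mp (hone j)
      have hval : φ X j = u := by
        simp only [hφ, if_neg hj, hu, Finset.toList_singleton, List.headD_cons]
      rw [hval, hu]
    refine ⟨hvX, ?_, ?_⟩
    · ext u
      simp only [Finset.mem_erase, Finset.mem_image]
      constructor
      · rintro ⟨huv, huX⟩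
        have hPu : P u ≠ k := by
          intro h
          have hm : u ∈ X.filter (fun w => P w = k) := Finset.mem_filter.mpr ⟨huX, h⟩
          rw [hfk, Finset.mem_singleton] at hm
          exact huv hm
        refine ⟨P u, ⟨hPu, Finset.mem_univ _⟩, ?_⟩
        have hm : u ∈ X.filter (fun w => P w = P u) := Finset.mem_filter.mpr ⟨huX, rfl⟩
        rw [hφj (P u) hPu, Finset.mem_singleton] at hm
        exact hm.symm
      · rintro ⟨j, hj, rfl⟩
        have hjk : j ≠ k := hj.1
        have hm : φ X j ∈ X.filter (fun u => P u = j) := by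
          rw [hφj j hjk]; exact Finset.mem_singleton_self _
        rw [Finset.mem_filter] at hm
        refine ⟨?_, hm.1⟩
        intro h
        have h2 := hm.2
        rw [h] at h2
        exact hjk (by rw [← h2, hPv])
    · intro j
      by_cases hj : j = k
      · subst hj
        simp only [hW, hφ, if_pos rfl]
        exact Finset.mem_singleton_self x
      · have hm : φ X j ∈ X.filter (fun u => P u = j) := by
          rw [hφj j hj]; exact Finset.mem_singleton_self _
        rw [Finset.mem_filter] at hm
        simp only [hW, if_neg hj, hV, Finset.mem_filter, Finset.mem_univ, true_and]
        exact ⟨hm.2, fun h => hvsX (h ▸ hm.1)⟩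
  set Dx := H.filter (fun X => X ∩ e = {x}) with hDx
  set Dy := H.filter (fun X => X ∩ e = {y}) with hDy
  have hdisj : Disjoint Dx Dy := by
    rw [Finset.disjoint_left]
    intro X hX hY
    rw [hDx, Finset.mem_filter] at hX
    rw [hDy, Finset.mem_filter] at hY
    have h := hY.2
    rw [hX.2] at h
    exact hxy (Finset.singleton_inj.mp h)
  have himg : ∀ (Z : Finset (Fin n)) (v : Fin n), v ∈ e → v ≠ vstar → P v = k →
      Z ∈ H → Z ∩ e = {v} → Z = insert v ((Finset.univ.erase k).image (φ Z)) := by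
    intro Z v h1 h2 h3 h4 h5
    obtain ⟨hvZ, himgZ, _⟩ := struct v h1 h2 h3 Z h4 h5
    rw [← himgZ, Finset.insert_erase hvZ]
  have hcross : ∀ X Y : Finset (Fin n), X ∈ H → X ∩ e = {x} → Y ∈ H → Y ∩ e = {y} →
      φ X = φ Y → False := by
    intro X Y hXH hXe hYH hYe hXY
    obtain ⟨hxX, himgX, _⟩ := struct x hxe hxv hPx X hXH hXe
    obtain ⟨hyY, himgY, _⟩ := struct y hye hyv hPy Y hYH hYe
    have hTeq : X.erase x = Y.erase y := by rw [himgX, himgY, hXY]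
    apply key (X.erase x)
    · intro u hu
      rw [Finset.mem_erase] at hu
      intro hue
      have : u ∈ X ∩ e := Finset.mem_inter.mpr ⟨hu.2, hue⟩
      rw [hXe, Finset.mem_singleton] at this
      exact hu.1 this
    · rw [Finset.card_erase_of_mem hxX, hcard X hXH]
    · rw [Finset.insert_erase hxX]; exact hXH
    · rw [hTeq, Finset.insert_erase hyY]; exact hYH
  have hDunion : Dx.card + Dy.card ≤ ∏ j, (W j).card := by
    rw [← Finset.card_union_of_disjoint hdisj]
    calc (Dx ∪ Dy).card ≤ (Fintype.piFinset W).card := by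
          apply Finset.card_le_card_of_injOn φ
          · intro X hX
            rw [Finset.mem_coe, Finset.mem_union] at hX
            rw [Finset.mem_coe, Fintype.mem_piFinset]
            rcases hX with h | h
            · rw [hDx, Finset.mem_filter] at h
              exact (struct x hxe hxv hPx X h.1 h.2).2.2
            · rw [hDy, Finset.mem_filter] at h
              exact (struct y hye hyv hPy X h.1 h.2).2.2
          · intro X hX Y hY hXY
            simp only [Finset.coe_union, Set.mem_union, Finset.mem_coe, hDx, hDy,
              Finset.mem_filter] at hX hY
            rcases hX with hX | hX <;> rcases hY with hY | hY
            · rw [himg X x hxe hxv hPx hX.1 hX.2, himg Y x hxe hxv hPx hY.1 hY.2, hXY]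
            · exact absurd (hcross X Y hX.1 hX.2 hY.1 hY.2 hXY) not_false
            · exact absurd (hcross Y X hY.1 hY.2 hX.1 hX.2 hXY.symm) not_false
            · rw [himg X y hye hyv hPy hX.1 hX.2, himg Y y hye hyv hPy hY.1 hY.2, hXY]
      _ = ∏ j, (W j).card := Fintype.card_piFinset W
  have hprodW : ∏ j, (W j).card = ∏ j ∈ Finset.univ.erase k, (V j).card := by
    rw [← Finset.mul_prod_erase Finset.univ (fun j => (W j).card) (Finset.mem_univ k)]
    have h1 : (W k).card = 1 := by simp [hW]
    rw [h1, one_mul]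
    apply Finset.prod_congr rfl
    intro j hj
    simp only [hW, if_neg (Finset.mem_erase.mp hj).1]
  -- real arithmetic
  have hnpos : 0 < n := Nat.lt_of_lt_of_le (Nat.succ_pos _) hn
  have hn0 : (0:ℝ) < (n:ℝ) := by exact_mod_cast hnpos
  have hcarderase : (Finset.univ.erase k).card = r - 1 := by
    rw [Finset.card_erase_of_mem (Finset.mem_univ k), Finset.card_univ, Fintype.card_fin]
  have hsizeb : ∀ j : Fin r, ((V j).card : ℝ) ≤ (n:ℝ)/r + 1/(3*(r:ℝ)^2) * n := by
    intro j
    have h := abs_le.mp (hsize j)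
    linarith [h.2]
  have hprodR : ((∏ j ∈ Finset.univ.erase k, (V j).card : ℕ) : ℝ)
      ≤ ((n:ℝ)/r + 1/(3*(r:ℝ)^2) * n)^(r-1) := by
    push_cast
    calc ∏ j ∈ Finset.univ.erase k, ((V j).card : ℝ)
        ≤ ∏ _j ∈ Finset.univ.erase k, ((n:ℝ)/r + 1/(3*(r:ℝ)^2) * n) :=
          Finset.prod_le_prod (fun j _ => by positivity) (fun j _ => hsizeb j)
      _ = ((n:ℝ)/r + 1/(3*(r:ℝ)^2) * n)^(r-1) := by
          rw [Finset.prod_const, hcarderase]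
  have hfactor : (n:ℝ)/r + 1/(3*(r:ℝ)^2)*n = ((n:ℝ)/r) * (1 + 1/(3*(r:ℝ))) := by
    field_simp
  have hpowb : ((n:ℝ)/r + 1/(3*(r:ℝ)^2)*n)^(r-1)
      ≤ (3/2) * ((n:ℝ)^(r-1)/(r:ℝ)^(r-1)) := by
    rw [hfactor, mul_pow, div_pow]
    calc ((n:ℝ)^(r-1)/(r:ℝ)^(r-1)) * (1 + 1/(3*(r:ℝ)))^(r-1)
        ≤ ((n:ℝ)^(r-1)/(r:ℝ)^(r-1)) * (3/2) :=
          mul_le_mul_of_nonneg_left (pow_bound_aux r hr) (by positivity)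
      _ = (3/2) * ((n:ℝ)^(r-1)/(r:ℝ)^(r-1)) := by ring
  have hdx := degree_split_aux hcard hecard x hxe
  have hdy := degree_split_aux hcard hecard y hye
  have hr1cast : ((r-1:ℕ):ℝ) ≤ (r:ℝ) := by exact_mod_cast Nat.sub_le r 1
  have hnn : (0:ℝ) ≤ (n:ℝ)^(r-2) := by positivity
  have hdxR : ((H.filter (fun X => x ∈ X)).card : ℝ)
      ≤ (Dx.card : ℝ) + ((r-1:ℕ):ℝ) * (n:ℝ)^(r-2) := by exact_mod_cast hdx
  have hdyR : ((H.filter (fun X => y ∈ X)).card : ℝ)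
      ≤ (Dy.card : ℝ) + ((r-1:ℕ):ℝ) * (n:ℝ)^(r-2) := by exact_mod_cast hdy
  have hDDR : (Dx.card : ℝ) + (Dy.card : ℝ)
      ≤ (3/2) * ((n:ℝ)^(r-1)/(r:ℝ)^(r-1)) := by
    have h1 : ((Dx.card + Dy.card : ℕ) : ℝ)
        ≤ ((∏ j ∈ Finset.univ.erase k, (V j).card : ℕ) : ℝ) := by
      exact_mod_cast hprodW ▸ hDunion
    push_cast at h1
    calc (Dx.card : ℝ) + (Dy.card : ℝ)
        ≤ _ := h1
      _ ≤ ((n:ℝ)/r + 1/(3*(r:ℝ)^2) * n)^(r-1) := by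
          exact_mod_cast hprodR
      _ ≤ (3/2) * ((n:ℝ)^(r-1)/(r:ℝ)^(r-1)) := hpowb
  have hA := hdeg x
  have hB := hdeg y
  set c := (n:ℝ)^(r-1) with hc
  set q := (r:ℝ)^(r-1) with hqd
  have hsum : 2*(c/q) - 2*(1/(8*q)*c) ≤ (3/2)*(c/q) + 2*(r:ℝ)*(n:ℝ)^(r-2) := by
    have t1 : c/q - 1/(8*q)*c ≤ (Dx.card:ℝ) + (r:ℝ)*(n:ℝ)^(r-2) := by
      have h := le_trans hA hdxR
      nlinarith [hr1cast, hnn]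
    have t2 : c/q - 1/(8*q)*c ≤ (Dy.card:ℝ) + (r:ℝ)*(n:ℝ)^(r-2) := by
      have h := le_trans hB hdyR
      nlinarith [hr1cast, hnn]
    linarith
  have e1 : 2*(c/q) - 2*(1/(8*q)*c) = (7/4)*(c/q) := by
    field_simp
    ring
  rw [e1] at hsum
  have h14 : (1/4)*(c/q) ≤ 2*(r:ℝ)*(n:ℝ)^(r-2) := by linarith
  have hcsplit : c = (n:ℝ)^(r-2) * n := by
    rw [hc, ← pow_succ]
    congr 1
    omega
  have hrr : (r:ℝ)^r = q * (r:ℝ) := by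
    rw [hqd, ← pow_succ]
    congr 1
    omega
  have hnlow : 8*(r:ℝ)^r < (n:ℝ) := by
    have h : ((8*r^r + 1 : ℕ) : ℝ) ≤ (n:ℝ) := by exact_mod_cast hn
    push_cast at h
    linarith
  have hm0 : (0:ℝ) < (n:ℝ)^(r-2) := pow_pos hn0 _
  have h3 : c/q ≤ 8*(r:ℝ)*(n:ℝ)^(r-2) := by linarith
  have h4 : c ≤ 8*(r:ℝ)*(n:ℝ)^(r-2)*q := by
    calc c = (c/q)*q := by field_simp
      _ ≤ 8*(r:ℝ)*(n:ℝ)^(r-2)*q := mul_le_mul_of_nonneg_right h3 (le_of_lt hq0)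
  nlinarith [h4, hcsplit, hrr, hnlow, hm0, mul_lt_mul_of_pos_right hnlow hm0]
end

section
/- Let H be an r-graph on [n], x = (x₁,...,x_n) a point of the standard simplex with β := r! · P_H(x) > 0, and let (X₁,...,X_r) be the random ordered edge with P[(X₁,...,X_r) = (i₁,...,i_r)] = x_{i₁}⋯x_{i_r}/β for each ordered tuple (i₁,...,i_r) whose underlying set is an edge of H. If moreover x is an optimal solution of the Lagrangian of H, then H(X₁,...,X_r) − r·H(X₁) = log β, where H(·) denotes Shannon entropy. -/
/-!
At an optimal point `x` of the Lagrangian, the first-order conditions on the simplex together with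
Euler's identity `∑ⱼ xⱼ ∂ⱼP_H(x) = r P_H(x)` give `xⱼ ∂ⱼP_H(x) = xⱼ r P_H(x)` for every `j`. Each
edge containing `j` has `(r-1)!` orderings with `j` in a prescribed position, so every coordinate
`X_k` of the random ordered edge has law `x`. Since `log P[X = t] = ∑ₖ log x_{t_k} - log β`, taking
expectations gives `H(X₁,…,X_r) = r H(X₁) + log β`.
-/

open Finset Real
open scoped Nat

section Tuples

variable {α : Type*} [DecidableEq α]

theorem Fin.image_insertNth_univ {m : ℕ} (k : Fin (m + 1)) (a : α) (s : Fin m → α) :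
    image (k.insertNth a s) univ = insert a (image s univ) := by
  apply coe_injective
  push_cast
  simp only [Set.image_univ, Fin.range_insertNth]
  rfl

theorem Fin.image_removeNth_univ {m : ℕ} {t : Fin (m + 1) → α} (ht : t.Injective)
    (k : Fin (m + 1)) : image (k.removeNth t) univ = (image t univ).erase (t k) := by
  rw [← image_erase ht, erase_eq, ← compl_eq_univ_sdiff, ← Fin.image_succAbove_univ, image_image]
  rfl

theorem Fin.injective_of_card_image_univ {m : ℕ} {t : Fin m → α} (ht : #(image t univ) = m) :
    t.Injective := by
  have := card_image_iff.1 (ht.trans (card_fin m).symm)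
  rwa [coe_univ, Set.injOn_univ] at this

variable [Fintype α]

theorem card_filter_image_univ_eq_and_apply_eq {m : ℕ} {e : Finset α} (he : #e = m + 1)
    {j : α} (hj : j ∈ e) (k : Fin (m + 1)) :
    #{t : Fin (m + 1) → α | image t univ = e ∧ t k = j} =
      #{s : Fin m → α | image s univ = e.erase j} := by
  refine card_nbij' k.removeNth (fun s => k.insertNth (α := fun _ => α) j s) ?_ ?_ ?_ ?_
  · intro t ht
    obtain ⟨himage, rfl⟩ := (mem_filter.1 ht).2
    have hinj := Fin.injective_of_card_image_univ (himage ▸ he)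
    simp [Fin.image_removeNth_univ hinj, himage]
  · intro s hs
    simp_all [Fin.image_insertNth_univ, insert_erase hj]
  · intro t ht
    obtain ⟨-, rfl⟩ := (mem_filter.1 ht).2
    simp
  · intro s _
    simp

theorem card_filter_image_univ_eq {m : ℕ} {e : Finset α} (he : #e = m) :
    #{t : Fin m → α | image t univ = e} = m ! := by
  induction m generalizing e with
  | zero => simp_all [Subsingleton.elim _ (Fin.elim0 : Fin 0 → α)]
  | succ m ih =>
    have hmaps : ∀ t ∈ ({t | image t univ = e} : Finset (Fin (m + 1) → α)), t 0 ∈ e := by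
      intro t ht
      rw [← (mem_filter.1 ht).2]
      exact mem_image_of_mem t (mem_univ 0)
    rw [card_eq_sum_card_fiberwise hmaps, sum_congr rfl fun j hj => ?_, sum_const, he,
      smul_eq_mul, Nat.factorial_succ]
    rw [filter_filter, card_filter_image_univ_eq_and_apply_eq he hj,
      ih (by rw [card_erase_of_mem hj, he, Nat.add_sub_cancel])]

end Tuples

theorem Real.mul_log_prod {ι : Type*} (s : Finset ι) (a : ι → ℝ) :
    (∏ i ∈ s, a i) * log (∏ i ∈ s, a i) = ∑ i ∈ s, (∏ j ∈ s, a j) * log (a i) := by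
  by_cases h : ∏ i ∈ s, a i = 0
  · simp [h]
  · rw [log_prod fun i hi hai => h (prod_eq_zero hi hai), mul_sum]

theorem neg_sum_mul_log_eq_of_marginals {α : Type*} [Fintype α] [DecidableEq α] {r : ℕ}
    [NeZero r] {S : Finset (Fin r → α)} {x : α → ℝ} {β : ℝ} (hsum : ∑ j, x j = 1) (hβ : 0 < β)
    (hmarg : ∀ k j, ∑ t ∈ S with t k = j, ∏ i, x (t i) = β * x j) :
    -∑ t ∈ S, (∏ i, x (t i)) / β * log ((∏ i, x (t i)) / β) =
      r * (-∑ j, x j * log (x j)) + log β := by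
  have hlog : ∀ k, ∑ t ∈ S, (∏ i, x (t i)) * log (x (t k)) = β * ∑ j, x j * log (x j) := by
    intro k
    rw [← sum_fiberwise S (· k), mul_sum]
    refine sum_congr rfl fun j _ => ?_
    rw [sum_congr rfl fun t ht => by rw [(mem_filter.1 ht).2], ← sum_mul, hmarg, mul_assoc]
  have htotal : ∑ t ∈ S, ∏ i, x (t i) = β := by
    rw [← sum_fiberwise S (· 0), sum_congr rfl fun j _ => hmarg 0 j, ← mul_sum, hsum, mul_one]
  have hpoint : ∀ t : Fin r → α, (∏ i, x (t i)) / β * log ((∏ i, x (t i)) / β) =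
      (∑ k, (∏ i, x (t i)) * log (x (t k))) / β - (∏ i, x (t i)) / β * log β := by
    intro t
    rcases eq_or_ne (∏ i, x (t i)) 0 with h | h
    · simp [h]
    · rw [log_div h hβ.ne', ← mul_log_prod]
      ring
  simp_rw [hpoint]
  rw [sum_sub_distrib, ← sum_div, sum_comm, ← sum_mul, ← sum_div, htotal]
  simp_rw [hlog]
  rw [sum_const, card_univ, Fintype.card_fin]
  field_simp
  ring

namespace Hypergraph

variable {α R : Type*} [DecidableEq α] (H : Finset (Finset α))

section CommSemiring

variable [CommSemiring R]

def lagrangian (x : α → R) : R := ∑ e ∈ H, ∏ i ∈ e, x i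

def partialLagrangian (x : α → R) (j : α) : R := ∑ e ∈ H with j ∈ e, ∏ i ∈ e.erase j, x i

theorem mul_partialLagrangian (x : α → R) (j : α) :
    x j * partialLagrangian H x j = ∑ e ∈ H with j ∈ e, ∏ i ∈ e, x i := by
  rw [partialLagrangian, mul_sum]
  exact sum_congr rfl fun e he => mul_prod_erase e x (mem_filter.1 he).2

theorem sum_mul_partialLagrangian [Fintype α] {r : ℕ} (huni : ∀ e ∈ H, #e = r) (x : α → R) :
    ∑ j, x j * partialLagrangian H x j = r * lagrangian H x := by
  simp_rw [mul_partialLagrangian, sum_filter]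
  rw [sum_comm, lagrangian, mul_sum]
  refine sum_congr rfl fun e he => ?_
  rw [sum_ite_mem, univ_inter, sum_const, huni e he, nsmul_eq_mul]

end CommSemiring

theorem hasFDerivAt_lagrangian [Fintype α] (x : α → ℝ) :
    HasFDerivAt (lagrangian H)
      (∑ j, partialLagrangian H x j • ContinuousLinearMap.proj j : (α → ℝ) →L[ℝ] ℝ) x := by
  have := HasFDerivAt.fun_sum (u := H) fun e _ =>
    HasFDerivAt.finsetProd (u := e) fun i _ => hasFDerivAt_apply (𝕜 := ℝ) i x
  refine this.congr_fderiv (ContinuousLinearMap.ext fun v => ?_)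
  simp only [FunLike.coe_sum, FunLike.coe_smul, Finset.sum_apply, Pi.smul_apply,
    ContinuousLinearMap.proj_apply, smul_eq_mul, partialLagrangian, sum_filter, sum_mul, ite_mul,
    zero_mul]
  rw [sum_comm]
  refine sum_congr rfl fun e _ => ?_
  rw [sum_ite_mem, univ_inter]

section Optimal

variable [Fintype α] {H} {r : ℕ} {x : α → ℝ}

theorem partialLagrangian_le_of_isMaxOn (huni : ∀ e ∈ H, #e = r) (hx : x ∈ stdSimplex ℝ α)
    (hmax : IsMaxOn (lagrangian H) (stdSimplex ℝ α) x) (j : α) :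
    partialLagrangian H x j ≤ r * lagrangian H x := by
  have hcone : Pi.single j 1 - x ∈ posTangentConeAt (stdSimplex ℝ α) x :=
    sub_mem_posTangentConeAt_of_segment_subset
      ((convex_stdSimplex ℝ α).segment_subset hx (single_mem_stdSimplex ℝ j))
  have hfirstOrder := hmax.localize.hasFDerivWithinAt_nonpos
    (hasFDerivAt_lagrangian H x).hasFDerivWithinAt hcone
  rw [← sum_mul_partialLagrangian H huni]
  simpa [Pi.single_apply, mul_sub, mul_comm] using hfirstOrder

theorem mul_partialLagrangian_of_isMaxOn (huni : ∀ e ∈ H, #e = r) (hx : x ∈ stdSimplex ℝ α)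
    (hmax : IsMaxOn (lagrangian H) (stdSimplex ℝ α) x) (j : α) :
    x j * partialLagrangian H x j = x j * (r * lagrangian H x) := by
  have hterm : ∀ i ∈ univ, 0 ≤ x i * (r * lagrangian H x - partialLagrangian H x i) :=
    fun i _ => mul_nonneg (hx.1 i)
      (sub_nonneg.2 (partialLagrangian_le_of_isMaxOn huni hx hmax i))
  have hzero : ∑ i, x i * (r * lagrangian H x - partialLagrangian H x i) = 0 := by
    simp only [mul_sub, sum_sub_distrib, ← sum_mul, hx.2, one_mul,
      sum_mul_partialLagrangian H huni, sub_self]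
  have hj := (sum_eq_zero_iff_of_nonneg hterm).1 hzero j (mem_univ j)
  rw [mul_sub, sub_eq_zero] at hj
  exact hj.symm

end Optimal

def orderedEdges [Fintype α] (r : ℕ) (H : Finset (Finset α)) : Finset (Fin r → α) :=
  {t | image t univ ∈ H}

theorem sum_orderedEdges_filter_apply_eq [Fintype α] [CommSemiring R] {H} {m : ℕ}
    (huni : ∀ e ∈ H, #e = m + 1) (x : α → R) (k : Fin (m + 1)) (j : α) :
    ∑ t ∈ orderedEdges (m + 1) H with t k = j, ∏ i, x (t i) =
      m ! * (x j * partialLagrangian H x j) := by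
  have hmaps : ∀ t ∈ ({t ∈ orderedEdges (m + 1) H | t k = j} : Finset (Fin (m + 1) → α)),
      image t univ ∈ ({e ∈ H | j ∈ e} : Finset (Finset α)) := by
    intro t ht
    obtain ⟨htH, rfl⟩ := mem_filter.1 ht
    exact mem_filter.2 ⟨(mem_filter.1 htH).2, mem_image_of_mem t (mem_univ k)⟩
  rw [← sum_fiberwise_of_maps_to hmaps, mul_partialLagrangian, mul_sum]
  refine sum_congr rfl fun e he => ?_
  obtain ⟨heH, hje⟩ := mem_filter.1 he
  have hfiber : {t ∈ {t ∈ orderedEdges (m + 1) H | t k = j} | image t univ = e} =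
      ({t | image t univ = e ∧ t k = j} : Finset (Fin (m + 1) → α)) := by
    ext t
    simp only [orderedEdges, mem_filter, mem_univ, true_and]
    constructor
    · rintro ⟨⟨-, hk⟩, himage⟩
      exact ⟨himage, hk⟩
    · rintro ⟨himage, hk⟩
      exact ⟨⟨himage ▸ heH, hk⟩, himage⟩
  have hprod : ∀ t ∈ ({t | image t univ = e ∧ t k = j} : Finset (Fin (m + 1) → α)),
      ∏ i, x (t i) = ∏ i ∈ e, x i := by
    intro t ht
    obtain ⟨himage, -⟩ := (mem_filter.1 ht).2
    have hinj := Fin.injective_of_card_image_univ (himage ▸ huni e heH)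
    rw [← himage, prod_image hinj.injOn]
  rw [hfiber, sum_congr rfl hprod, sum_const,
    card_filter_image_univ_eq_and_apply_eq (huni e heH) hje,
    card_filter_image_univ_eq (by rw [card_erase_of_mem hje, huni e heH, Nat.add_sub_cancel]),
    nsmul_eq_mul]

end Hypergraph

open Hypergraph

/-- Entropy identity for an optimal Lagrangian vector: let `H` be an `r`-graph
on `[n]`, `x` a simplex point with `β := r! · P_H(x) > 0`, and let
`(X₁,…,X_r)` be the random ordered edge with
`P[(X₁,…,X_r) = (i₁,…,i_r)] = x_{i₁}⋯x_{i_r}/β` for each ordered tuple whose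
underlying set is an edge of `H`. If `x` is an optimal solution of the
Lagrangian of `H`, then `H(X₁,…,X_r) − r·H(X₁) = log β`, where `H(·)` denotes
Shannon entropy. -/
theorem entropy_of_optimal_solution (n r : ℕ) (hr : 1 ≤ r)
    (H : Finset (Finset (Fin n))) (huniform : ∀ e ∈ H, e.card = r)
    (x : Fin n → ℝ) (hnn : ∀ i, 0 ≤ x i) (hsum : ∑ i, x i = 1)
    (β : ℝ) (hβ : β = (r.factorial : ℝ) * ∑ e ∈ H, ∏ i ∈ e, x i)
    (hβpos : 0 < β)
    (hopt : ∀ y : Fin n → ℝ, (∀ i, 0 ≤ y i) → ∑ i, y i = 1 →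
      ∑ e ∈ H, ∏ i ∈ e, y i ≤ ∑ e ∈ H, ∏ i ∈ e, x i) :
    -- ordered edges, joint distribution `p`, and first marginal `q`
    (fun (OE : Finset (Fin r → Fin n)) (p : (Fin r → Fin n) → ℝ) =>
      ∀ q : Fin n → ℝ,
        (∀ j : Fin n, q j = ∑ t ∈ OE.filter (fun t => t ⟨0, hr⟩ = j), p t) →
        (- ∑ t ∈ OE, p t * Real.log (p t)) -
            (r : ℝ) * (- ∑ j, q j * Real.log (q j)) = Real.log β)
      (Finset.univ.filter (fun t : Fin r → Fin n => Finset.image t Finset.univ ∈ H))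
      (fun t => (∏ k, x (t k)) / β) := by
  obtain ⟨m, rfl⟩ : ∃ m, r = m + 1 := ⟨r - 1, by omega⟩
  intro q hq
  have hx : x ∈ stdSimplex ℝ (Fin n) := ⟨hnn, hsum⟩
  have hmax : IsMaxOn (lagrangian H) (stdSimplex ℝ (Fin n)) x := fun y hy => hopt y hy.1 hy.2
  have hmarg : ∀ k j, ∑ t ∈ orderedEdges (m + 1) H with t k = j, ∏ i, x (t i) = β * x j := by
    intro k j
    rw [sum_orderedEdges_filter_apply_eq huniform,
      mul_partialLagrangian_of_isMaxOn huniform hx hmax, hβ, Nat.factorial_succ, lagrangian]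
    push_cast
    ring
  obtain rfl : q = x := funext fun j => by
    rw [hq, ← sum_div]
    exact (hmarg 0 j).symm ▸ mul_div_cancel_left₀ _ hβpos.ne'
  rw [← orderedEdges, neg_sum_mul_log_eq_of_marginals hsum hβpos hmarg]
  ring
end
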